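/- arXiv:2503.10184 — 10 statements merged into one kernel-verified Lean document; each statement's English description precedes it below -/
import Mathlib

section
/- Let C ⊆ X be a cone in a real normed space. Then cl(conv(B_{cl C})) = cl(conv(B_C)), where B_D := D ∩ S_X denotes the norm-base of a cone D (the intersection with the unit sphere). -/
open Set

def IsCone {X : Type*} [NormedAddCommGroup X] [NormedSpace ℝ X] (C : Set X) : Prop :=
  0 ∈ C ∧ ∀ t : ℝ, 0 ≤ t → ∀ x ∈ C, t • x ∈ C

/-- Radial projection `y ↦ (r / ‖y‖) • y` onto the sphere is continuous away from `0` and fixes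
the sphere, so it carries points of `s` close to `x` to points of `s ∩ sphere 0 r` close to `x`. -/
theorem closure_inter_sphere_subset {X : Type*} [NormedAddCommGroup X] [NormedSpace ℝ X]
    {s : Set X} (hs : ∀ t : ℝ, 0 < t → ∀ x ∈ s, t • x ∈ s) {r : ℝ} (hr : 0 < r) :
    closure s ∩ Metric.sphere 0 r ⊆ closure (s ∩ Metric.sphere 0 r) := by
  rintro x ⟨hx, hxr⟩
  have hx0 : x ≠ 0 := Metric.ne_of_mem_sphere hxr hr.ne'
  set f : X → X := fun y => (r * ‖y‖⁻¹) • y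
  have hfx : f x = x := by simp [f, mem_sphere_zero_iff_norm.1 hxr, hr.ne']
  have hcont : ContinuousWithinAt f ({0}ᶜ ∩ s) x :=
    ContinuousAt.continuousWithinAt (by fun_prop (disch := exact norm_ne_zero_iff.2 hx0))
  have hmaps : MapsTo f ({0}ᶜ ∩ s) (s ∩ Metric.sphere 0 r) := by
    rintro y ⟨hy0, hy⟩
    have hny : ‖y‖ ≠ 0 := norm_ne_zero_iff.2 hy0
    refine ⟨hs _ (by positivity) y hy, ?_⟩
    simp [f, norm_smul, abs_of_pos hr, hny]
  rw [← hfx]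
  exact hcont.mem_closure (isOpen_compl_singleton.inter_closure ⟨hx0, hx⟩) hmaps

theorem closure_convexHull_normBase_closure
    {X : Type*} [NormedAddCommGroup X] [NormedSpace ℝ X]
    (C : Set X) (hC : IsCone C) :
    closure (convexHull ℝ (closure C ∩ Metric.sphere (0:X) 1)) =
      closure (convexHull ℝ (C ∩ Metric.sphere (0:X) 1)) := by
  simp only [← closedConvexHull_eq_closure_convexHull]
  refine subset_antisymm ?_
    ((closedConvexHull ℝ).monotone (inter_subset_inter_left _ subset_closure))
  calc closedConvexHull ℝ (closure C ∩ Metric.sphere 0 1)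
      ⊆ closedConvexHull ℝ (closure (C ∩ Metric.sphere 0 1)) :=
        (closedConvexHull ℝ).monotone
          (closure_inter_sphere_subset (fun t ht => hC.2 t ht.le) one_pos)
    _ = closedConvexHull ℝ (C ∩ Metric.sphere 0 1) := closedConvexHull_closure_eq_closedConvexHull
end

section
/- Let X be a real normed space, x* ∈ X* \ {0}, and α ∈ ℝ. Define C(x*,α) := {x ∈ X : x*(x) ≥ α‖x‖}. Then C(x*,α) ≠ X if and only if α > −‖x*‖₊, where ‖x*‖₊ is the dual norm of x*. -/
open Set

theorem bishopPhelps_cone_ne_univ_iff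
    {X : Type*} [NormedAddCommGroup X] [NormedSpace ℝ X]
    (f : X →L[ℝ] ℝ) (hf : f ≠ 0) (α : ℝ) :
    {x : X | α * ‖x‖ ≤ f x} ≠ Set.univ ↔ -‖f‖ < α := by
  have hfpos : 0 < ‖f‖ := norm_pos_iff.mpr hf
  constructor
  · intro h
    by_contra hα
    push_neg at hα
    apply h
    ext x
    simp only [mem_setOf_eq, mem_univ, iff_true]
    have h1 : |f x| ≤ ‖f‖ * ‖x‖ := by
      simpa using f.le_opNorm x
    have h2 : -(‖f‖ * ‖x‖) ≤ f x := neg_le_of_abs_le h1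
    calc α * ‖x‖ ≤ -‖f‖ * ‖x‖ := by
          exact mul_le_mul_of_nonneg_right hα (norm_nonneg x)
      _ = -(‖f‖ * ‖x‖) := by ring
      _ ≤ f x := h2
  · intro hα h
    rcases lt_or_ge α 0 with hα0 | hα0
    · have hr : -α < ‖f‖ := by linarith
      obtain ⟨y, hy⟩ := f.exists_mul_lt_of_lt_opNorm (by linarith) hr
      have hy' : -‖f y‖ < α * ‖y‖ := by
        have := hy
        nlinarith [abs_nonneg (f y)]
      rcases le_or_gt 0 (f y) with hfy | hfy
      · have hmem : (-y) ∈ {x : X | α * ‖x‖ ≤ f x} := h ▸ mem_univ _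
        simp only [mem_setOf_eq, norm_neg, map_neg] at hmem
        have : ‖f y‖ = f y := by simpa [Real.norm_eq_abs] using abs_of_nonneg hfy
        linarith
      · have hmem : y ∈ {x : X | α * ‖x‖ ≤ f x} := h ▸ mem_univ _
        simp only [mem_setOf_eq] at hmem
        have : ‖f y‖ = -(f y) := by simpa [Real.norm_eq_abs] using abs_of_neg hfy
        linarith
    · obtain ⟨y, hy⟩ : ∃ y, f y ≠ 0 := by
        by_contra hc
        push_neg at hc
        exact hf (ContinuousLinearMap.ext fun x => by simp [hc x])
      rcases lt_or_ge (f y) 0 with hfy | hfy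
      · have hmem : y ∈ {x : X | α * ‖x‖ ≤ f x} := h ▸ mem_univ _
        simp only [mem_setOf_eq] at hmem
        nlinarith [norm_nonneg y]
      · have hfy' : 0 < f y := lt_of_le_of_ne hfy (Ne.symm hy)
        have hmem : (-y) ∈ {x : X | α * ‖x‖ ≤ f x} := h ▸ mem_univ _
        simp only [mem_setOf_eq, norm_neg, map_neg] at hmem
        nlinarith [norm_nonneg y]
end

section
/- Let X be a real normed space, C ⊆ X a cone, x* ∈ X*, α ∈ (−‖x*‖₊, ‖x*‖₊). If α < inf{x*(x) : x ∈ conv(bd C ∩ S_X)}, then exactly one of the following holds: int C ⊆ C(x*,α), or X \ int C ⊆ C(x*,α), where C(x*,α) := {x ∈ X : x*(x) ≥ α‖x‖}. -/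
open Set

theorem relative_position_of_bishopPhelps_cone_inf
    {X : Type*} [NormedAddCommGroup X] [NormedSpace ℝ X]
    (C : Set X) (hC : IsCone C) (f : X →L[ℝ] ℝ) (α : ℝ)
    (hα : α ∈ Set.Ioo (-‖f‖) ‖f‖)
    (h : (α : EReal) <
      ⨅ x : ↥(convexHull ℝ (frontier C ∩ Metric.sphere (0:X) 1)), ((f x : ℝ) : EReal)) :
    Xor' (interior C ⊆ {x : X | α * ‖x‖ ≤ f x})
      (Set.univ \ interior C ⊆ {x : X | α * ‖x‖ ≤ f x}) := by
  obtain ⟨hα1, hα2⟩ := hα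
  have habs : |α| < ‖f‖ := abs_lt.2 ⟨hα1, hα2⟩
  set D : Set X := {x : X | f x < α * ‖x‖} with hDdef
  -- find v with f v < -(|α| * ‖v‖)
  obtain ⟨u, hu⟩ : ∃ u : X, |α| * ‖u‖ < ‖f u‖ := by
    by_contra hcon
    push_neg at hcon
    exact absurd (f.opNorm_le_bound (abs_nonneg α) (fun x => hcon x)) (not_le.2 habs)
  obtain ⟨v, hv⟩ : ∃ v : X, f v < -(|α| * ‖v‖) := by
    rw [Real.norm_eq_abs] at hu
    rcases le_or_gt 0 (f u) with h0 | h0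
    · exact ⟨-u, by rw [map_neg, norm_neg]; rw [abs_of_nonneg h0] at hu; linarith⟩
    · exact ⟨u, by rw [abs_of_neg h0] at hu; linarith⟩
  have hvD : v ∈ D := by
    have := mul_le_mul_of_nonneg_right (neg_abs_le α) (norm_nonneg v)
    simp only [hDdef, mem_setOf_eq]
    nlinarith
  -- ray lemma
  have rayD : ∀ x ∈ D, ∀ t : ℝ, 0 ≤ t → x + t • v ∈ D := by
    intro x hx t ht
    simp only [hDdef, mem_setOf_eq] at hx ⊢
    rw [map_add, map_smul, smul_eq_mul]
    have h3 : α * ‖x‖ - α * ‖x + t • v‖ ≤ |α| * (t * ‖v‖) := by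
      have h4 : |‖x‖ - ‖x + t • v‖| ≤ ‖x - (x + t • v)‖ := abs_norm_sub_norm_le _ _
      have h5 : ‖x - (x + t • v)‖ = t * ‖v‖ := by
        rw [sub_add_cancel_left, norm_neg, norm_smul, Real.norm_eq_abs, abs_of_nonneg ht]
      rw [h5] at h4
      calc α * ‖x‖ - α * ‖x + t • v‖ = α * (‖x‖ - ‖x + t • v‖) := by ring
        _ ≤ |α * (‖x‖ - ‖x + t • v‖)| := le_abs_self _
        _ = |α| * |‖x‖ - ‖x + t • v‖| := abs_mul _ _
        _ ≤ |α| * (t * ‖v‖) := by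
            exact mul_le_mul_of_nonneg_left h4 (abs_nonneg α)
    nlinarith [mul_le_mul_of_nonneg_left hv.le ht]
  -- far translate lemma
  have farD : ∀ T : ℝ, ∀ w : X, (‖f‖ + |α|) * ‖w‖ + 1 ≤ T * (-(f v) - |α| * ‖v‖) →
      w + T • v ∈ D := by
    intro T w hT
    simp only [hDdef, mem_setOf_eq]
    rw [map_add, map_smul, smul_eq_mul]
    have hfw : f w ≤ ‖f‖ * ‖w‖ := (le_abs_self _).trans (f.le_opNorm w)
    have htri : ‖w + T • v‖ ≤ ‖w‖ + T * ‖v‖ := by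
      have hTnn : 0 ≤ T := by
        nlinarith [norm_nonneg w, abs_nonneg α, norm_nonneg v, f.opNorm_nonneg,
          mul_nonneg (abs_nonneg α) (norm_nonneg v)]
      calc ‖w + T • v‖ ≤ ‖w‖ + ‖T • v‖ := norm_add_le _ _
        _ = ‖w‖ + T * ‖v‖ := by
            rw [norm_smul, Real.norm_eq_abs, abs_of_nonneg hTnn]
    have hna : -(|α| * ‖w + T • v‖) ≤ α * ‖w + T • v‖ := by
      nlinarith [mul_le_mul_of_nonneg_right (neg_abs_le α) (norm_nonneg (w + T • v))]
    nlinarith [mul_le_mul_of_nonneg_left htri (abs_nonneg α), norm_nonneg w, norm_nonneg v,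
      abs_nonneg α]
  -- segment-to-JoinedIn helper
  have segJoin : ∀ a b : X, segment ℝ a b ⊆ D → JoinedIn D a b := by
    intro a b hsub
    have hpc := (convex_segment a b).isPathConnected ⟨a, left_mem_segment ℝ a b⟩
    exact (hpc.joinedIn a (left_mem_segment ℝ a b) b (right_mem_segment ℝ a b)).mono hsub
  -- D is path connected
  have hjoin : ∀ x ∈ D, ∀ y ∈ D, JoinedIn D x y := by
    intro x hx y hy
    have hδ : 0 < -(f v) - |α| * ‖v‖ := by linarith
    set R : ℝ := ‖x‖ + ‖y‖ with hR
    set T : ℝ := ((‖f‖ + |α|) * R + 1) / (-(f v) - |α| * ‖v‖) with hTdef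
    have hRnn : 0 ≤ R := add_nonneg (norm_nonneg x) (norm_nonneg y)
    have hTpos : 0 < T := by
      apply div_pos _ hδ
      nlinarith [f.opNorm_nonneg, abs_nonneg α]
    have hTmul : T * (-(f v) - |α| * ‖v‖) = (‖f‖ + |α|) * R + 1 := by
      rw [hTdef, div_mul_cancel₀ _ (ne_of_gt hδ)]
    -- first segment : x to x + T • v
    have J1 : JoinedIn D x (x + T • v) := by
      apply segJoin
      intro p hp
      rw [segment_eq_image'] at hp
      obtain ⟨θ, hθ, rfl⟩ := hp
      show x + θ • (x + T • v - x) ∈ D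
      have heq : x + θ • (x + T • v - x) = x + (θ * T) • v := by
        rw [add_sub_cancel_left, smul_smul]
      rw [heq]
      exact rayD x hx (θ * T) (mul_nonneg hθ.1 hTpos.le)
    have J3 : JoinedIn D y (y + T • v) := by
      apply segJoin
      intro p hp
      rw [segment_eq_image'] at hp
      obtain ⟨θ, hθ, rfl⟩ := hp
      show y + θ • (y + T • v - y) ∈ D
      have heq : y + θ • (y + T • v - y) = y + (θ * T) • v := by
        rw [add_sub_cancel_left, smul_smul]
      rw [heq]
      exact rayD y hy (θ * T) (mul_nonneg hθ.1 hTpos.le)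
    -- middle segment
    have J2 : JoinedIn D (x + T • v) (y + T • v) := by
      apply segJoin
      intro p hp
      obtain ⟨a, b, ha, hb, hab, rfl⟩ := hp
      have hrw : a • (x + T • v) + b • (y + T • v) = (a • x + b • y) + T • v := by
        have h1 : a • (x + T • v) + b • (y + T • v)
            = a • x + b • y + (a + b) • (T • v) := by
          rw [smul_add, smul_add, add_smul]; abel
        rw [h1, hab, one_smul]
      rw [hrw]
      apply farD
      have hwn : ‖a • x + b • y‖ ≤ R := by
        calc ‖a • x + b • y‖ ≤ ‖a • x‖ + ‖b • y‖ := norm_add_le _ _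
          _ = a * ‖x‖ + b * ‖y‖ := by
              rw [norm_smul, norm_smul, Real.norm_eq_abs, Real.norm_eq_abs,
                abs_of_nonneg ha, abs_of_nonneg hb]
          _ ≤ R := by nlinarith [norm_nonneg x, norm_nonneg y]
      rw [hTmul]
      have : (‖f‖ + |α|) * ‖a • x + b • y‖ ≤ (‖f‖ + |α|) * R :=
        mul_le_mul_of_nonneg_left hwn (by positivity)
      linarith
    exact (J1.trans J2).trans J3.symm
  have hpc : IsPathConnected D := ⟨v, hvD, fun {y} hy => hjoin v hvD y hy⟩
  have hpre : IsPreconnected D := hpc.isConnected.isPreconnected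
  -- frontier C is in the closed cone K
  have frontierK : ∀ z ∈ frontier C, α * ‖z‖ ≤ f z := by
    intro z hz
    rcases eq_or_ne z 0 with rfl | hz0
    · simp
    have hzpos : 0 < ‖z‖ := norm_pos_iff.2 hz0
    set w : X := ‖z‖⁻¹ • z with hwdef
    have hwfr : w ∈ frontier C := by
      rw [frontier_eq_closure_inter_closure] at hz ⊢
      have hcont : Continuous (fun y : X => ‖z‖⁻¹ • y) := continuous_const_smul _
      have hmt1 : Set.MapsTo (fun y : X => ‖z‖⁻¹ • y) C C := by
        intro x hx
        exact hC.2 _ (inv_nonneg.2 hzpos.le) x hx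
      have hmt2 : Set.MapsTo (fun y : X => ‖z‖⁻¹ • y) Cᶜ Cᶜ := by
        intro x hx hmem
        apply hx
        have h5 : ‖z‖ • ‖z‖⁻¹ • x ∈ C := hC.2 ‖z‖ hzpos.le _ hmem
        rwa [smul_inv_smul₀ (ne_of_gt hzpos)] at h5
      exact ⟨map_mem_closure hcont hz.1 hmt1, map_mem_closure hcont hz.2 hmt2⟩
    have hws : w ∈ Metric.sphere (0:X) 1 := by
      rw [mem_sphere_zero_iff_norm, hwdef, norm_smul, Real.norm_eq_abs,
        abs_of_nonneg (inv_nonneg.2 hzpos.le)]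
      field_simp
    have hwch : w ∈ convexHull ℝ (frontier C ∩ Metric.sphere (0:X) 1) :=
      subset_convexHull ℝ _ ⟨hwfr, hws⟩
    have hlt : (α : EReal) < ((f w : ℝ) : EReal) :=
      lt_of_lt_of_le h (iInf_le _ (⟨w, hwch⟩ : ↥(convexHull ℝ (frontier C ∩ Metric.sphere (0:X) 1))))
    have hαfw : α < f w := by exact_mod_cast hlt
    have hfz : f z = ‖z‖ * f w := by
      rw [hwdef, map_smul, smul_eq_mul]
      field_simp
    rw [hfz]
    have := mul_lt_mul_of_pos_left hαfw hzpos
    linarith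
  -- D avoids frontier, so lies in interior C ∪ interior Cᶜ
  have Dsub : D ⊆ interior C ∪ interior Cᶜ := by
    intro x hx
    by_contra hcon
    rw [mem_union] at hcon
    push_neg at hcon
    have hxfr : x ∈ frontier C := by
      rw [frontier_eq_closure_inter_closure]
      constructor
      · by_contra hxc
        exact hcon.2 (by rwa [interior_compl, mem_compl_iff])
      · rw [closure_compl, mem_compl_iff]; exact hcon.1
    exact absurd (frontierK x hxfr) (not_le.2 hx)
  have hdisj : Disjoint (interior C) (interior Cᶜ) :=
    Disjoint.mono interior_subset interior_subset disjoint_compl_right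
  have hvnK : ¬ (α * ‖v‖ ≤ f v) := not_le.2 hvD
  rcases hpre.subset_or_subset isOpen_interior isOpen_interior hdisj Dsub with h1 | h2
  · -- D ⊆ interior C : second alternative holds, first fails
    refine Or.inr ⟨?_, ?_⟩
    · intro x hx
      by_contra hxK
      simp only [mem_setOf_eq] at hxK
      exact hx.2 (h1 (show x ∈ D from not_le.1 hxK))
    · intro hA
      exact hvnK (hA (h1 hvD))
  · -- D ⊆ interior Cᶜ : first alternative holds, second fails
    have hvnc : v ∉ C := interior_subset (h2 hvD)
    refine Or.inl ⟨?_, ?_⟩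
    · intro x hx
      by_contra hxK
      simp only [mem_setOf_eq] at hxK
      exact absurd (interior_subset hx)
        (interior_subset (h2 (show x ∈ D from not_le.1 hxK)))
    · intro hB
      exact hvnK (hB ⟨trivial, fun hvi => hvnc (interior_subset hvi)⟩)
end

section
/- Let X be a real normed space, C ⊆ X a cone, x* ∈ X*, α ∈ (−‖x*‖₊, ‖x*‖₊). If sup{x*(x) : x ∈ conv(bd C ∩ S_X)} < α, then exactly one of the following holds: C(x*,α) ⊆ X \ int C, or C(x*,α) \ {0} ⊆ int C, where C(x*,α) := {x ∈ X : x*(x) ≥ α‖x‖}. -/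
open Set

private lemma frontier_smul_mem_of_isCone {X : Type*} [NormedAddCommGroup X] [NormedSpace ℝ X]
    {C : Set X} (hC : IsCone C) {t : ℝ} (ht : 0 < t) {x : X} (hx : x ∈ frontier C) :
    t • x ∈ frontier C := by
  constructor
  · have h1 : (fun z : X => t • z) '' closure C ⊆ closure ((fun z : X => t • z) '' C) :=
      image_closure_subset_closure_image (continuous_const_smul t)
    have h2 : (fun z : X => t • z) '' C ⊆ C := by
      rintro _ ⟨y, hy, rfl⟩; exact hC.2 t ht.le y hy
    exact closure_mono h2 (h1 ⟨x, hx.1, rfl⟩)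
  · intro hmem
    apply hx.2
    have hopen : IsOpen ((fun z : X => t • z) ⁻¹' interior C) :=
      isOpen_interior.preimage (continuous_const_smul t)
    have hsub : ((fun z : X => t • z) ⁻¹' interior C) ⊆ C := by
      intro z hz
      have : t⁻¹ • (t • z) ∈ C := hC.2 t⁻¹ (by positivity) _ (interior_subset hz)
      rwa [smul_smul, inv_mul_cancel₀ ht.ne', one_smul] at this
    exact interior_maximal hsub hopen hmem

theorem relative_position_of_bishopPhelps_cone_sup
    {X : Type*} [NormedAddCommGroup X] [NormedSpace ℝ X]
    (C : Set X) (hC : IsCone C) (f : X →L[ℝ] ℝ) (α : ℝ)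
    (hα : α ∈ Set.Ioo (-‖f‖) ‖f‖)
    (h : (⨆ x : ↥(convexHull ℝ (frontier C ∩ Metric.sphere (0:X) 1)),
        ((f x : ℝ) : EReal)) < (α : EReal)) :
    Xor' ({x : X | α * ‖x‖ ≤ f x} ⊆ Set.univ \ interior C)
      ({x : X | α * ‖x‖ ≤ f x} \ {0} ⊆ interior C) := by
  obtain ⟨hα1, hα2⟩ := hα
  have habs : |α| < ‖f‖ := abs_lt.mpr ⟨hα1, hα2⟩
  -- a unit vector `u` with `|α| < f u`
  obtain ⟨u, hu1, hu2⟩ : ∃ u : X, ‖u‖ = 1 ∧ |α| < f u := by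
    obtain ⟨v, hv1, hv2⟩ := f.exists_lt_apply_of_lt_opNorm habs
    set w : X := if 0 ≤ f v then v else -v with hw
    have hfw : |α| < f w := by
      rcases le_or_gt 0 (f v) with hs | hs
      · have h' := hv2
        rw [Real.norm_eq_abs, abs_of_nonneg hs] at h'
        simpa [hw, if_pos hs] using h'
      · have : ‖f v‖ = -(f v) := abs_of_neg hs
        simp only [hw, if_neg (not_le.mpr hs), map_neg]
        rw [this] at hv2; exact hv2
    have hwne : w ≠ 0 := by
      intro h0; rw [h0, map_zero] at hfw
      exact absurd hfw (not_lt.mpr (abs_nonneg α))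
    have hwn : 0 < ‖w‖ := norm_pos_iff.mpr hwne
    have hwle : ‖w‖ < 1 := by
      rcases le_or_gt 0 (f v) with hs | hs
      · simpa [hw, if_pos hs] using hv1
      · simpa [hw, if_neg (not_le.mpr hs)] using hv1
    refine ⟨‖w‖⁻¹ • w, ?_, ?_⟩
    · rw [norm_smul, norm_inv, norm_norm, inv_mul_cancel₀ hwn.ne']
    · rw [map_smul, smul_eq_mul]
      have h1 : (1:ℝ) ≤ ‖w‖⁻¹ := (one_le_inv₀ hwn).mpr hwle.le
      have hfw0 : 0 < f w := lt_of_le_of_lt (abs_nonneg α) hfw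
      nlinarith
  have hfu0 : 0 < f u := lt_of_le_of_lt (abs_nonneg α) hu2
  -- points of the frontier other than 0 are not in the Bishop-Phelps cone
  have hfront : ∀ x ∈ frontier C, x ≠ 0 → f x < α * ‖x‖ := by
    intro x hx hxne
    have hxn : 0 < ‖x‖ := norm_pos_iff.mpr hxne
    have h1 : ‖x‖⁻¹ • x ∈ frontier C := frontier_smul_mem_of_isCone hC (inv_pos.mpr hxn) hx
    have h2 : ‖x‖⁻¹ • x ∈ Metric.sphere (0:X) 1 := by
      rw [mem_sphere_iff_norm, sub_zero, norm_smul, norm_inv, norm_norm,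
        inv_mul_cancel₀ hxn.ne']
    have h3 : ‖x‖⁻¹ • x ∈ convexHull ℝ (frontier C ∩ Metric.sphere (0:X) 1) :=
      subset_convexHull ℝ _ ⟨h1, h2⟩
    have h4 : ((f (‖x‖⁻¹ • x) : ℝ) : EReal) ≤
        ⨆ x : ↥(convexHull ℝ (frontier C ∩ Metric.sphere (0:X) 1)), ((f x : ℝ) : EReal) :=
      le_iSup (fun z : ↥(convexHull ℝ (frontier C ∩ Metric.sphere (0:X) 1)) =>
        ((f z : ℝ) : EReal)) ⟨_, h3⟩
    have h5 : f (‖x‖⁻¹ • x) < α := by exact_mod_cast lt_of_le_of_lt h4 h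
    rw [map_smul, smul_eq_mul] at h5
    have h6 : ‖x‖ * (‖x‖⁻¹ * f x) < ‖x‖ * α := mul_lt_mul_of_pos_left h5 hxn
    rw [← mul_assoc, mul_inv_cancel₀ hxn.ne', one_mul] at h6
    linarith [h6]
  -- the segment from a nonzero point `b` of the cone to `‖b‖ • u` stays in the cone minus 0
  have hseg : ∀ b : X, α * ‖b‖ ≤ f b → b ≠ 0 → ∀ θ ∈ Icc (0:ℝ) 1,
      ((1 - θ) • b + (θ * ‖b‖) • u) ∈ {x : X | α * ‖x‖ ≤ f x} \ {0} := by
    intro b hb hbne θ hθ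
    obtain ⟨hθ0, hθ1⟩ := hθ
    have hbn : 0 < ‖b‖ := norm_pos_iff.mpr hbne
    set x : X := (1 - θ) • b + (θ * ‖b‖) • u with hxdef
    have hnd : |‖x‖ - (1 - θ) * ‖b‖| ≤ θ * ‖b‖ := by
      have h1 := abs_norm_sub_norm_le x ((1 - θ) • b)
      have h2 : x - (1 - θ) • b = (θ * ‖b‖) • u := by rw [hxdef]; abel
      rw [h2] at h1
      simp only [norm_smul, hu1, mul_one, Real.norm_eq_abs] at h1
      rwa [abs_of_nonneg (mul_nonneg hθ0 (norm_nonneg b)),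
        abs_of_nonneg (by linarith : (0:ℝ) ≤ 1 - θ)] at h1
    have hnd' : |‖x‖ - θ * ‖b‖| ≤ (1 - θ) * ‖b‖ := by
      have h1 := abs_norm_sub_norm_le x ((θ * ‖b‖) • u)
      have h2 : x - (θ * ‖b‖) • u = (1 - θ) • b := by rw [hxdef]; abel
      rw [h2] at h1
      simp only [norm_smul, hu1, mul_one, Real.norm_eq_abs] at h1
      rwa [abs_of_nonneg (mul_nonneg hθ0 (norm_nonneg b)),
        abs_of_nonneg (by linarith : (0:ℝ) ≤ 1 - θ)] at h1
    have hfx : f x = (1 - θ) * f b + (θ * ‖b‖) * f u := by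
      rw [hxdef, map_add, map_smul, map_smul, smul_eq_mul, smul_eq_mul]
    constructor
    · show α * ‖x‖ ≤ f x
      rw [hfx]
      obtain ⟨hd1, hd2⟩ := abs_le.mp hnd
      nlinarith [le_abs_self α, neg_abs_le α, mul_nonneg (mul_nonneg hθ0 hbn.le) (sub_nonneg.mpr hu2.le), mul_nonneg (sub_nonneg.mpr hθ1) (sub_nonneg.mpr hb)]
    · show x ≠ 0
      intro h0
      have hnx : ‖x‖ = 0 := by rw [h0, norm_zero]
      have hθhalf : θ = 1 / 2 := by
        rw [hnx] at hnd hnd'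
        have e1 : -(θ * ‖b‖) ≤ 0 - (1 - θ) * ‖b‖ := (abs_le.mp hnd).1
        have e2 : -((1 - θ) * ‖b‖) ≤ 0 - θ * ‖b‖ := (abs_le.mp hnd').1
        have e3 : (1 - θ) * ‖b‖ = θ * ‖b‖ := le_antisymm (by linarith) (by linarith)
        have e4 : (1 - θ) = θ := mul_right_cancel₀ hbn.ne' e3
        linarith
      have hfx0 : f x = 0 := by rw [h0, map_zero]
      rw [hfx, hθhalf] at hfx0
      -- f b = -‖b‖ * f u, contradicting α * ‖b‖ ≤ f b
      nlinarith [neg_abs_le α]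
  -- positive multiples of u are in the cone minus 0
  have hray : ∀ s : ℝ, 0 < s → (s • u) ∈ {x : X | α * ‖x‖ ≤ f x} \ {0} := by
    intro s hs
    constructor
    · show α * ‖s • u‖ ≤ f (s • u)
      rw [norm_smul, hu1, mul_one, Real.norm_eq_abs, abs_of_pos hs, map_smul, smul_eq_mul]
      nlinarith [le_abs_self α]
    · show s • u ≠ 0
      intro h0
      have : ‖s • u‖ = 0 := by rw [h0, norm_zero]
      rw [norm_smul, hu1, mul_one, Real.norm_eq_abs, abs_of_pos hs] at this
      exact hs.ne' this
  -- main step: if the cone meets interior C at some point, then all of it minus 0 is inside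
  have hmain : ∀ a, α * ‖a‖ ≤ f a → a ∈ interior C →
      ∀ b, α * ‖b‖ ≤ f b → b ≠ 0 → b ∈ interior C := by
    -- first reduce to a ≠ 0
    have key : ∀ a, α * ‖a‖ ≤ f a → a ≠ 0 → a ∈ interior C →
        ∀ b, α * ‖b‖ ≤ f b → b ≠ 0 → b ∈ interior C := by
      intro a ha hane haint b hb hbne
      by_contra hbint
      have hbn : 0 < ‖b‖ := norm_pos_iff.mpr hbne
      have han : 0 < ‖a‖ := norm_pos_iff.mpr hane
      set J : Set X := segment ℝ b (‖b‖ • u) ∪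
        (segment ℝ (‖b‖ • u) (‖a‖ • u) ∪ segment ℝ (‖a‖ • u) a) with hJ
      have hJconn : IsPreconnected J := by
        apply IsPreconnected.union (‖b‖ • u)
        · exact right_mem_segment ℝ b (‖b‖ • u)
        · exact Or.inl (left_mem_segment ℝ (‖b‖ • u) (‖a‖ • u))
        · exact (convex_segment _ _).isPreconnected
        · apply IsPreconnected.union (‖a‖ • u)
          · exact right_mem_segment ℝ (‖b‖ • u) (‖a‖ • u)
          · exact left_mem_segment ℝ (‖a‖ • u) a
          · exact (convex_segment _ _).isPreconnected
          · exact (convex_segment _ _).isPreconnected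
      have hJsub : J ⊆ {x : X | α * ‖x‖ ≤ f x} \ {0} := by
        rintro x (hx | hx | hx)
        · rw [segment_eq_image] at hx
          obtain ⟨θ, hθ, rfl⟩ := hx
          have := hseg b hb hbne θ hθ
          show (1 - θ) • b + θ • ‖b‖ • u ∈ _
          rw [smul_smul]; exact this
        · rw [segment_eq_image] at hx
          obtain ⟨θ, hθ, rfl⟩ := hx
          show (1 - θ) • ‖b‖ • u + θ • ‖a‖ • u ∈ _
          rw [smul_smul, smul_smul, ← add_smul]
          apply hray
          rcases lt_or_ge θ 1 with h1 | h1
          · have : 0 < (1 - θ) * ‖b‖ := by nlinarith [hθ.1]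
            nlinarith [mul_nonneg hθ.1 han.le]
          · have hθe : θ = 1 := le_antisymm hθ.2 h1
            rw [hθe]; simpa using han
        · rw [segment_symm, segment_eq_image] at hx
          obtain ⟨θ, hθ, rfl⟩ := hx
          have := hseg a ha hane θ hθ
          show (1 - θ) • a + θ • ‖a‖ • u ∈ _
          rw [smul_smul]; exact this
      have hbncl : b ∉ closure C := by
        intro hcl
        have hbf : b ∈ frontier C := ⟨hcl, hbint⟩
        exact absurd hb (not_le.mpr (hfront b hbf hbne))
      have hJUV : J ⊆ interior C ∪ (closure C)ᶜ := by
        intro x hx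
        obtain ⟨hxK, hxne⟩ := hJsub hx
        by_cases hcl : x ∈ closure C
        · by_cases hint : x ∈ interior C
          · exact Or.inl hint
          · exact absurd (hfront x ⟨hcl, hint⟩ hxne) (not_lt.mpr hxK)
        · exact Or.inr hcl
      have haJ : a ∈ J := Or.inr (Or.inr (right_mem_segment ℝ (‖a‖ • u) a))
      have hbJ : b ∈ J := Or.inl (left_mem_segment ℝ b (‖b‖ • u))
      obtain ⟨z, _, hz1, hz2⟩ := hJconn (interior C) (closure C)ᶜ isOpen_interior
        isClosed_closure.isOpen_compl hJUV ⟨a, haJ, haint⟩ ⟨b, hbJ, hbncl⟩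
      exact hz2 (subset_closure (interior_subset hz1))
    intro a ha haint b hb hbne
    by_cases hane : a = 0
    · -- 0 ∈ interior C : take a small positive multiple of u instead
      rw [hane] at haint
      obtain ⟨ε, hε, hball⟩ := Metric.isOpen_iff.mp isOpen_interior 0 haint
      have hmem : (ε / 2) • u ∈ interior C := by
        apply hball
        rw [Metric.mem_ball, dist_zero_right, norm_smul, hu1, mul_one, Real.norm_eq_abs,
          abs_of_pos (by linarith)]
        linarith
      have h2 := hray (ε / 2) (by linarith)
      exact key _ h2.1 h2.2 hmem b hb hbne
    · exact key a ha hane haint b hb hbne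
  -- u itself is in the cone and nonzero
  have huK : α * ‖u‖ ≤ f u := by rw [hu1, mul_one]; exact (le_abs_self α).trans hu2.le
  have hune : u ≠ 0 := by intro h0; rw [h0, norm_zero] at hu1; norm_num at hu1
  by_cases hcase : ∃ a, α * ‖a‖ ≤ f a ∧ a ∈ interior C
  · obtain ⟨a, ha, haint⟩ := hcase
    refine Or.inr ⟨?_, ?_⟩
    · rintro b ⟨hb, hbne⟩
      exact hmain a ha haint b hb hbne
    · intro hA
      exact (hA ha).2 haint
  · refine Or.inl ⟨?_, ?_⟩
    · intro x hx
      exact ⟨mem_univ x, fun hint => hcase ⟨x, hx, hint⟩⟩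
    · intro hB
      exact hcase ⟨u, huK, hB ⟨huK, hune⟩⟩
end

section
/- Let C, K be nontrivial cones in a real normed space X, S_C := conv(C ∩ S_X), S_K⁰ := conv({0} ∪ (K ∩ S_X)). If 0 ∉ cl(S_C − S_K⁰), then (cl S_K⁰) ∩ (cl S_C) = ∅, and furthermore (cl K) ∩ cl(conv C) = {0} and 0 ∉ cl S_C. -/
open Set Pointwise

/-!
The hypothesis gives `δ > 0` with `δ ≤ ‖y - u‖` for `y ∈ S_C`, `u ∈ S_K⁰`. The first and third
claims follow because `cl S_C - cl S_K⁰ ⊆ cl (S_C - S_K⁰)` and `0 ∈ S_K⁰`. For the second, every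
`p ∈ conv C` is `t • y` with `y ∈ S_C` and `‖p‖ ≤ t`, and since `S_K⁰` contains the unit ball of `K`,
rescaling the separation gives the angle estimate `δ ‖p‖ ≤ 2 ‖p - k‖` for all `k ∈ K`. This closed
condition passes to `cl (conv C) × cl K`, and on the diagonal it forces `p = 0`.
-/

theorem closure_inter_closure_eq_empty_of_zero_notMem_closure_sub {G : Type*}
    [TopologicalSpace G] [AddGroup G] [ContinuousSub G] {A B : Set G}
    (h : (0 : G) ∉ closure (A - B)) : closure B ∩ closure A = ∅ := by
  refine eq_empty_of_forall_notMem fun x ⟨hxB, hxA⟩ => h ?_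
  simpa using map_mem_closure₂ continuous_sub hxA hxB fun a ha b hb => sub_mem_sub ha hb

theorem ConvexCone.convex_insert_zero {𝕜 E : Type*} [Field 𝕜] [LinearOrder 𝕜]
    [IsStrictOrderedRing 𝕜] [AddCommGroup E] [Module 𝕜 E] (S : ConvexCone 𝕜 E) :
    Convex 𝕜 (insert 0 (S : Set E)) := by
  refine convex_iff_forall_pos.2 fun x hx y hy a b ha hb _ => ?_
  rcases hx with rfl | hx <;> rcases hy with rfl | hy
  · simp
  · simpa using Or.inr (S.smul_mem hb hy)
  · simpa using Or.inr (S.smul_mem ha hx)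
  · exact Or.inr (S.add_mem (S.smul_mem ha hx) (S.smul_mem hb hy))

section

variable {X : Type*} [NormedAddCommGroup X] [NormedSpace ℝ X]

theorem norm_le_one_of_mem_convexHull_inter_sphere {s : Set X} {y : X}
    (hy : y ∈ convexHull ℝ (s ∩ Metric.sphere 0 1)) : ‖y‖ ≤ 1 := by
  simpa using convexHull_min (inter_subset_right.trans Metric.sphere_subset_closedBall)
    (convex_closedBall (0 : X) 1) hy

namespace IsCone

variable {C K : Set X}

theorem inv_norm_smul_mem_inter_sphere (hC : IsCone C) {x : X} (hx : x ∈ C) (hx0 : x ≠ 0) :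
    ‖x‖⁻¹ • x ∈ C ∩ Metric.sphere 0 1 :=
  ⟨hC.2 _ (by positivity) x hx, by simp [norm_smul, norm_ne_zero_iff.2 hx0]⟩

theorem mem_convexHull_zero_union_inter_sphere (hK : IsCone K) {v : X} (hv : v ∈ K)
    (hv1 : ‖v‖ ≤ 1) : v ∈ convexHull ℝ ({0} ∪ (K ∩ Metric.sphere 0 1)) := by
  have hzero : (0 : X) ∈ convexHull ℝ ({0} ∪ (K ∩ Metric.sphere 0 1)) :=
    subset_convexHull ℝ _ (mem_union_left _ rfl)
  rcases eq_or_ne v 0 with rfl | hv0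
  · exact hzero
  have hunit := subset_convexHull ℝ ({0} ∪ (K ∩ Metric.sphere 0 1))
    (mem_union_right _ (hK.inv_norm_smul_mem_inter_sphere hv hv0))
  simpa [smul_smul, norm_ne_zero_iff.2 hv0] using (convex_convexHull ℝ _).smul_mem_of_zero_mem
    hzero hunit ⟨norm_nonneg v, hv1⟩

theorem convexHull_subset_insert_zero_hull (hC : IsCone C) :
    convexHull ℝ C ⊆
      insert 0 (ConvexCone.hull ℝ (convexHull ℝ (C ∩ Metric.sphere (0 : X) 1))) := by
  refine convexHull_min (fun c hc => ?_) (ConvexCone.convex_insert_zero _)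
  rcases eq_or_ne c 0 with rfl | hc0
  · exact Or.inl rfl
  · have hunit := subset_convexHull ℝ _ (hC.inv_norm_smul_mem_inter_sphere hc hc0)
    refine Or.inr ?_
    simpa [smul_smul, norm_ne_zero_iff.2 hc0] using
      (ConvexCone.hull ℝ _).smul_mem (norm_pos_iff.2 hc0) (ConvexCone.subset_hull hunit)

/-- Compare `t • y` with `t • u`, where `u := k / max t ‖k‖` is a point of `K` of norm at most
one: the error `‖k - t • u‖ ≤ max t ‖k‖ - t` is itself at most `‖t • y - k‖`. -/
theorem mul_le_two_mul_norm_smul_sub (hK : IsCone K) {δ t : ℝ} {y k : X} (hy : ‖y‖ ≤ 1)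
    (hsep : ∀ u ∈ K, ‖u‖ ≤ 1 → δ ≤ ‖y - u‖) (ht : 0 ≤ t) (hk : k ∈ K) :
    δ * t ≤ 2 * ‖t • y - k‖ := by
  rcases ht.eq_or_lt with rfl | htpos
  · simp
  set m := max t ‖k‖
  have hm : 0 < m := htpos.trans_le (le_max_left _ _)
  have hu : m⁻¹ • k ∈ K := hK.2 _ (inv_nonneg.2 hm.le) k hk
  have hu1 : ‖m⁻¹ • k‖ ≤ 1 := by
    rw [norm_smul, norm_inv, Real.norm_of_nonneg hm.le]
    exact inv_mul_le_one_of_le₀ (le_max_right _ _) hm.le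
  have hgap : m - t ≤ ‖t • y - k‖ := by
    have hty : ‖t • y‖ ≤ t := by
      rw [norm_smul, Real.norm_of_nonneg ht]
      exact mul_le_of_le_one_right ht hy
    rw [sub_le_iff_le_add]
    refine max_le (by linarith [norm_nonneg (t • y - k)]) ?_
    linarith [norm_le_norm_add_norm_sub' k (t • y), norm_sub_rev k (t • y)]
  have hshrink : ‖k - t • m⁻¹ • k‖ ≤ m - t := by
    have hcoef : 0 ≤ 1 - t * m⁻¹ := by
      rw [sub_nonneg, ← div_eq_mul_inv]
      exact div_le_one_of_le₀ (le_max_left _ _) hm.le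
    calc ‖k - t • m⁻¹ • k‖ = ‖(1 - t * m⁻¹) • k‖ := by rw [sub_smul, one_smul, smul_smul]
      _ = (1 - t * m⁻¹) * ‖k‖ := by rw [norm_smul, Real.norm_of_nonneg hcoef]
      _ ≤ (1 - t * m⁻¹) * m := by gcongr; exact le_max_right _ _
      _ = m - t := by field_simp
  calc δ * t ≤ ‖y - m⁻¹ • k‖ * t := mul_le_mul_of_nonneg_right (hsep _ hu hu1) ht
    _ = ‖t • y - t • m⁻¹ • k‖ := by rw [← smul_sub, norm_smul, Real.norm_of_nonneg ht, mul_comm]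
    _ ≤ ‖t • y - k‖ + ‖k - t • m⁻¹ • k‖ := norm_sub_le_norm_sub_add_norm_sub _ _ _
    _ ≤ 2 * ‖t • y - k‖ := by linarith

theorem mul_norm_le_two_mul_norm_sub (hC : IsCone C) (hK : IsCone K) {δ : ℝ} (hδ : 0 ≤ δ)
    (hsep : ∀ y ∈ convexHull ℝ (C ∩ Metric.sphere 0 1), ∀ u ∈ K, ‖u‖ ≤ 1 → δ ≤ ‖y - u‖)
    {p k : X} (hp : p ∈ convexHull ℝ C) (hk : k ∈ K) : δ * ‖p‖ ≤ 2 * ‖p - k‖ := by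
  rcases hC.convexHull_subset_insert_zero_hull hp with rfl | hp
  · simp
  obtain ⟨t, ht, y, hy, rfl⟩ := (ConvexCone.mem_hull_of_convex (convex_convexHull ℝ _)).1 hp
  have hy1 := norm_le_one_of_mem_convexHull_inter_sphere hy
  calc δ * ‖t • y‖ ≤ δ * t := by
        gcongr
        rw [norm_smul, Real.norm_of_nonneg ht.le]
        exact mul_le_of_le_one_right ht.le hy1
    _ ≤ 2 * ‖t • y - k‖ := hK.mul_le_two_mul_norm_smul_sub hy1 (hsep y hy) ht.le hk

theorem eq_zero_of_mem_closure_of_mem_closure_convexHull (hC : IsCone C) (hK : IsCone K)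
    {δ : ℝ} (hδ : 0 < δ)
    (hsep : ∀ y ∈ convexHull ℝ (C ∩ Metric.sphere 0 1), ∀ u ∈ K, ‖u‖ ≤ 1 → δ ≤ ‖y - u‖)
    {x : X} (hxK : x ∈ closure K) (hxC : x ∈ closure (convexHull ℝ C)) : x = 0 := by
  have hclosed : IsClosed {q : X × X | δ * ‖q.1‖ ≤ 2 * ‖q.1 - q.2‖} :=
    isClosed_le (by fun_prop) (by fun_prop)
  have hsub : convexHull ℝ C ×ˢ K ⊆ {q : X × X | δ * ‖q.1‖ ≤ 2 * ‖q.1 - q.2‖} :=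
    fun q hq => hC.mul_norm_le_two_mul_norm_sub hK hδ.le hsep hq.1 hq.2
  have hxx : (x, x) ∈ closure (convexHull ℝ C ×ˢ K) := by
    rw [closure_prod_eq]
    exact ⟨hxC, hxK⟩
  have hx : δ * ‖x‖ ≤ 2 * ‖x - x‖ := hclosed.closure_subset_iff.2 hsub hxx
  rw [sub_self, norm_zero, mul_zero] at hx
  exact norm_le_zero_iff.1 (nonpos_of_mul_nonpos_right hx hδ)

end IsCone

end

theorem nonsym_separation_consequences_general
    {X : Type*} [NormedAddCommGroup X] [NormedSpace ℝ X]
    (C K : Set X) (hC : IsCone C) (hK : IsCone K)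
    (h : (0 : X) ∉ closure (convexHull ℝ (C ∩ Metric.sphere (0:X) 1) -
        convexHull ℝ ({0} ∪ (K ∩ Metric.sphere (0:X) 1)))) :
    closure (convexHull ℝ ({0} ∪ (K ∩ Metric.sphere (0:X) 1))) ∩
        closure (convexHull ℝ (C ∩ Metric.sphere (0:X) 1)) = ∅ ∧
    closure K ∩ closure (convexHull ℝ C) = {0} ∧
    (0 : X) ∉ closure (convexHull ℝ (C ∩ Metric.sphere (0:X) 1)) := by
  have hdisj := closure_inter_closure_eq_empty_of_zero_notMem_closure_sub h
  obtain ⟨δ, hδ, hsep⟩ : ∃ δ > 0, ∀ z ∈ convexHull ℝ (C ∩ Metric.sphere 0 1) -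
      convexHull ℝ ({0} ∪ (K ∩ Metric.sphere 0 1)), δ ≤ ‖z‖ := by
    simpa [Metric.mem_closure_iff] using h
  have hsepK : ∀ y ∈ convexHull ℝ (C ∩ Metric.sphere 0 1), ∀ u ∈ K, ‖u‖ ≤ 1 → δ ≤ ‖y - u‖ :=
    fun y hy u hu hu1 => by
      simpa using hsep _ (sub_mem_sub hy (hK.mem_convexHull_zero_union_inter_sphere hu hu1))
  have hzero : (0 : X) ∈ convexHull ℝ ({0} ∪ (K ∩ Metric.sphere 0 1)) :=
    hK.mem_convexHull_zero_union_inter_sphere hK.1 (by simp)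
  refine ⟨hdisj, eq_singleton_iff_unique_mem.2 ⟨?_, ?_⟩, fun h0 => ?_⟩
  · exact ⟨subset_closure hK.1, subset_closure (subset_convexHull ℝ C hC.1)⟩
  · exact fun x hx => hC.eq_zero_of_mem_closure_of_mem_closure_convexHull hK hδ hsepK hx.1 hx.2
  · exact hdisj.subset ⟨subset_closure hzero, h0⟩

theorem nonsym_separation_consequences
    {X : Type*} [NormedAddCommGroup X] [NormedSpace ℝ X]
    (C K : Set X) (hC : IsCone C) (hK : IsCone K)
    (hCnt : C ≠ {0} ∧ C ≠ Set.univ) (hKnt : K ≠ {0} ∧ K ≠ Set.univ)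
    (h : (0 : X) ∉ closure (convexHull ℝ (C ∩ Metric.sphere (0:X) 1) -
        convexHull ℝ ({0} ∪ (K ∩ Metric.sphere (0:X) 1)))) :
    closure (convexHull ℝ ({0} ∪ (K ∩ Metric.sphere (0:X) 1))) ∩
        closure (convexHull ℝ (C ∩ Metric.sphere (0:X) 1)) = ∅ ∧
    closure K ∩ closure (convexHull ℝ C) = {0} ∧
    (0 : X) ∉ closure (convexHull ℝ (C ∩ Metric.sphere (0:X) 1)) :=
  nonsym_separation_consequences_general C K hC hK h
end

section
/- Let C, K be nontrivial cones in a real normed space X. Then 0 ∉ cl(S_C − S_K⁰) if and only if [0 ∉ cl(S_{bd C} − S_{bd K}⁰) and K ∩ C = {0}], where for a set D, S_D := conv(D ∩ S_X) and S_D⁰ := conv({0} ∪ (D ∩ S_X)). -/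
open Set Pointwise

/-!
If `0 ∉ cl(S_C - S_K⁰)`, the boundary condition follows from `S_{bd C} ⊆ cl S_C` and
`S_{bd K}⁰ ⊆ cl S_K⁰`, and a common unit vector of `C` and `K` would put `0` into `S_C - S_K⁰`.

Conversely, if `dim X ≤ 1` the cones are opposite rays. Otherwise the frontiers of `C` and `K`
meet the sphere, and Hahn–Banach gives a functional `g` and levels `0 ≤ s < r₂ < r₁ < s + α` with
`g ≤ s` on `S_{bd K}⁰` and `g ≥ s + α` on `S_{bd C}`. The open cone `{g < r₁ ‖·‖}` is star-shaped
about a vector on which `g` is very negative, hence connected, and by homogeneity it misses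
`bd C`; so it lies in `int C` or misses `C`. It contains a point of `bd K`, hence points of
`K ∖ {0}`, so it cannot lie in `int C`: thus `g ≥ r₁` on `C ∩ S_X`. Symmetrically `g ≤ r₂` on
`K ∩ S_X`, and then `g ≥ r₁ - r₂ > 0` on `S_C - S_K⁰`.
-/

open Metric

theorem IsPreconnected.subset_interior_or_disjoint {α : Type*} [TopologicalSpace α]
    {s t : Set α} (hs : IsPreconnected s) (hst : Disjoint s (frontier t)) :
    s ⊆ interior t ∨ Disjoint s t := by
  have hcover : s ⊆ interior t ∪ (closure t)ᶜ := fun x hx ↦ by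
    by_contra h
    simp only [mem_union, mem_compl_iff, not_or, not_not] at h
    exact hst.notMem_of_mem_left hx ⟨h.2, h.1⟩
  refine (hs.subset_or_subset isOpen_interior isClosed_closure.isOpen_compl
    (disjoint_compl_right.mono_left interior_subset_closure) hcover).imp id fun h ↦ ?_
  exact disjoint_compl_left.mono h subset_closure

section

variable {X : Type*} [NormedAddCommGroup X] [NormedSpace ℝ X] {C K : Set X}

theorem closure_convexHull_sub_subset {A A' B B' : Set X} (hA : A ⊆ closure A')
    (hB : B ⊆ closure B') :
    closure (convexHull ℝ A - convexHull ℝ B) ⊆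
      closure (convexHull ℝ A' - convexHull ℝ B') := by
  have hull_subset {S S' : Set X} (h : S ⊆ closure S') :
      convexHull ℝ S ⊆ closure (convexHull ℝ S') :=
    convexHull_min (h.trans (closure_mono (subset_convexHull ℝ S')))
      (convex_convexHull ℝ S').closure
  refine closure_minimal ?_ isClosed_closure
  rintro _ ⟨a, ha, b, hb, rfl⟩
  exact map_mem_closure₂ continuous_sub (hull_subset hA ha) (hull_subset hB hb)
    fun a ha b hb ↦ sub_mem_sub ha hb

theorem zero_notMem_closure_convexHull_sub_of_le {A B : Set X} (g : StrongDual ℝ X)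
    {r₁ r₂ : ℝ} (hA : ∀ a ∈ A, r₁ ≤ g a) (hB : ∀ b ∈ B, g b ≤ r₂) (hr : r₂ < r₁) :
    (0 : X) ∉ closure (convexHull ℝ A - convexHull ℝ B) := by
  have hA' : convexHull ℝ A ⊆ {x | r₁ ≤ g x} :=
    convexHull_min hA (convex_halfSpace_ge g.isLinear r₁)
  have hB' : convexHull ℝ B ⊆ {x | g x ≤ r₂} :=
    convexHull_min hB (convex_halfSpace_le g.isLinear r₂)
  have hsub : convexHull ℝ A - convexHull ℝ B ⊆ {x | r₁ - r₂ ≤ g x} := by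
    rintro _ ⟨a, ha, b, hb, rfl⟩
    show r₁ - r₂ ≤ g (a - b)
    have hga : r₁ ≤ g a := hA' ha
    have hgb : g b ≤ r₂ := hB' hb
    rw [map_sub]
    linarith
  intro h0
  have : r₁ - r₂ ≤ g 0 := closure_minimal hsub (isClosed_le continuous_const g.continuous) h0
  linarith [map_zero g]

theorem exists_separating_level {A B : Set X} (hA : A.Nonempty) (hB : B.Nonempty)
    (h : (0 : X) ∉ closure (convexHull ℝ A - convexHull ℝ B)) :
    ∃ (g : StrongDual ℝ X) (s α : ℝ), 0 < α ∧ (∀ b ∈ B, g b ≤ s) ∧ ∀ a ∈ A, s + α ≤ g a := by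
  obtain ⟨f, u, hf, hu⟩ := geometric_hahn_banach_closed_point
    ((convex_convexHull ℝ A).sub (convex_convexHull ℝ B)).closure isClosed_closure h
  rw [map_zero] at hu
  have hsep : ∀ b ∈ B, ∀ a ∈ A, -f b ≤ -f a + u := fun b hb a ha ↦ by
    have := hf (a - b) (subset_closure (sub_mem_sub (subset_convexHull ℝ A ha)
      (subset_convexHull ℝ B hb)))
    rw [map_sub] at this
    linarith
  obtain ⟨s, hsB, hsA⟩ := exists_between_of_forall_le (hB.image fun b ↦ -f b)
    (hA.image fun a ↦ -f a + u)
    (by rintro _ ⟨b, hb, rfl⟩ _ ⟨a, ha, rfl⟩; exact hsep b hb a ha)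
  refine ⟨-f, s, -u, by linarith, fun b hb ↦ hsB ⟨b, hb, rfl⟩, fun a ha ↦ ?_⟩
  have := hsA ⟨a, ha, rfl⟩
  simp only [neg_apply] at this ⊢
  linarith

theorem ContinuousLinearMap.exists_lt_neg_mul_norm (g : StrongDual ℝ X) {c : ℝ}
    (hc₀ : 0 ≤ c) (hc : c < ‖g‖) : ∃ z : X, g z < -(c * ‖z‖) := by
  by_contra! h
  refine hc.not_ge (g.opNorm_le_bound hc₀ fun x ↦ ?_)
  have := h (-x)
  rw [map_neg, norm_neg] at this
  rw [Real.norm_eq_abs, abs_le]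
  constructor <;> linarith [h x]

theorem starConvex_setOf_lt_mul_norm (g : StrongDual ℝ X) (r : ℝ) {z : X}
    (hz : g z < -(|r| * ‖z‖)) : StarConvex ℝ z {x | g x < r * ‖x‖} := by
  intro y (hy : g y < r * ‖y‖) a b ha hb hab
  show g (a • z + b • y) < r * ‖a • z + b • y‖
  have hdist : |‖a • z + b • y‖ - b * ‖y‖| ≤ a * ‖z‖ := by
    simpa [norm_smul, abs_of_nonneg ha, abs_of_nonneg hb] using
      abs_norm_sub_norm_le (a • z + b • y) (b • y)
  have hlower : r * (b * ‖y‖) - |r| * (a * ‖z‖) ≤ r * ‖a • z + b • y‖ := by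
    have := neg_abs_le (r * (‖a • z + b • y‖ - b * ‖y‖))
    rw [abs_mul] at this
    nlinarith [mul_le_mul_of_nonneg_left hdist (abs_nonneg r)]
  have hneg : a * (g z + |r| * ‖z‖) + b * (g y - r * ‖y‖) < 0 := by
    rcases ha.eq_or_lt with rfl | ha'
    · rw [zero_add] at hab
      subst hab
      linarith
    · nlinarith [mul_lt_mul_of_pos_left (show g z + |r| * ‖z‖ < 0 by linarith) ha',
        mul_le_mul_of_nonneg_left (show g y - r * ‖y‖ ≤ 0 by linarith) hb]
  simp only [map_add, map_smul, smul_eq_mul]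
  nlinarith

theorem isPreconnected_setOf_lt_mul_norm (g : StrongDual ℝ X) {r : ℝ} (hr : |r| < ‖g‖) :
    IsPreconnected {x : X | g x < r * ‖x‖} := by
  obtain ⟨z, hz⟩ := g.exists_lt_neg_mul_norm (abs_nonneg r) hr
  have hzU : g z < r * ‖z‖ := by nlinarith [neg_abs_le r, norm_nonneg z]
  exact ((starConvex_setOf_lt_mul_norm g r hz).isPathConnected hzU).isConnected.isPreconnected

theorem IsCone.smul_mem_frontier (hC : IsCone C) {t : ℝ} (ht : 0 < t) {x : X}
    (hx : x ∈ frontier C) : t • x ∈ frontier C := by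
  have hCt : (Homeomorph.smulOfNeZero t ht.ne') '' C = C := by
    refine (image_subset_iff.2 fun y hy ↦ hC.2 t ht.le y hy).antisymm fun y hy ↦ ?_
    exact ⟨t⁻¹ • y, hC.2 _ (inv_nonneg.2 ht.le) y hy, smul_inv_smul₀ ht.ne' y⟩
  rw [← hCt, ← Homeomorph.image_frontier]
  exact mem_image_of_mem _ hx

theorem inv_norm_smul_mem_sphere {x : X} (hx0 : x ≠ 0) : ‖x‖⁻¹ • x ∈ sphere (0 : X) 1 :=
  mem_sphere_zero_iff_norm.2 (norm_smul_inv_norm hx0)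

theorem IsCone.inv_norm_smul_mem (hC : IsCone C) {x : X} (hx : x ∈ C) (hx0 : x ≠ 0) :
    ‖x‖⁻¹ • x ∈ C ∩ sphere (0 : X) 1 :=
  ⟨hC.2 _ (by positivity) x hx, inv_norm_smul_mem_sphere hx0⟩

theorem IsCone.inv_norm_smul_mem_frontier (hC : IsCone C) {x : X} (hx : x ∈ frontier C)
    (hx0 : x ≠ 0) : ‖x‖⁻¹ • x ∈ frontier C ∩ sphere (0 : X) 1 :=
  ⟨hC.smul_mem_frontier (by positivity) hx, inv_norm_smul_mem_sphere hx0⟩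

theorem IsCone.closure_inter_sphere_subset (hC : IsCone C) :
    closure C ∩ sphere (0 : X) 1 ⊆ closure (C ∩ sphere (0 : X) 1) := by
  rintro x ⟨hxC, hxS⟩
  have hx0 : x ≠ 0 := ne_zero_of_mem_unit_sphere ⟨x, hxS⟩
  have hcont : ContinuousAt (fun y : X ↦ ‖y‖⁻¹ • y) x :=
    (continuous_norm.continuousAt.inv₀ (norm_ne_zero_iff.2 hx0)).smul continuousAt_id
  have himage : (fun y : X ↦ ‖y‖⁻¹ • y) '' C ⊆ {0} ∪ (C ∩ sphere (0 : X) 1) := by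
    rintro _ ⟨y, hy, rfl⟩
    rcases eq_or_ne y 0 with rfl | hy0
    · simp
    · exact Or.inr (hC.inv_norm_smul_mem hy hy0)
  have := closure_mono himage (mem_closure_image hcont hxC)
  rw [closure_union, closure_singleton] at this
  simpa [mem_sphere_zero_iff_norm.1 hxS, hx0] using this

theorem IsCone.inter_eq_zero_of_zero_notMem_closure (hC : IsCone C) (hK : IsCone K)
    (h : (0 : X) ∉ closure (convexHull ℝ (C ∩ sphere (0 : X) 1) -
      convexHull ℝ ({0} ∪ (K ∩ sphere (0 : X) 1)))) :
    K ∩ C = {0} := by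
  refine subset_antisymm (fun x ⟨hxK, hxC⟩ ↦ ?_) (singleton_subset_iff.2 ⟨hK.1, hC.1⟩)
  by_contra hx0
  refine h (subset_closure ?_)
  simpa using sub_mem_sub (subset_convexHull ℝ _ (hC.inv_norm_smul_mem hxC hx0))
    (subset_convexHull ℝ ({0} ∪ (K ∩ sphere (0 : X) 1))
      (Or.inr (hK.inv_norm_smul_mem hxK hx0)))

theorem IsCone.frontier_inter_sphere_nonempty (hrank : 1 < Module.rank ℝ X) (hC : IsCone C)
    (hC0 : C ≠ {0}) (hCuniv : C ≠ univ) : (frontier C ∩ sphere (0 : X) 1).Nonempty := by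
  obtain ⟨x, hx0, hx⟩ : ∃ x : X, x ≠ 0 ∧ x ∈ frontier C := by
    by_contra! h
    rcases (isConnected_compl_singleton_of_one_lt_rank hrank 0).isPreconnected
      |>.subset_interior_or_disjoint (disjoint_left.2 h) with hint | hdisj
    · refine hCuniv (eq_univ_of_forall fun y ↦ ?_)
      rcases eq_or_ne y 0 with rfl | hy0
      exacts [hC.1, interior_subset (hint hy0)]
    · refine hC0 (subset_antisymm (fun y hy ↦ ?_) (singleton_subset_iff.2 hC.1))
      by_contra hy0
      exact hdisj.notMem_of_mem_right hy hy0
  exact ⟨_, hC.inv_norm_smul_mem_frontier hx hx0⟩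

theorem IsCone.le_apply_of_frontier (hC : IsCone C) {g : StrongDual ℝ X} {r : ℝ}
    (hr : |r| < ‖g‖) (hfr : ∀ a ∈ frontier C ∩ sphere (0 : X) 1, r ≤ g a)
    (hKC : K ∩ C ⊆ {0}) {b : X} (hb : b ∈ closure K ∩ sphere (0 : X) 1) (hbr : g b < r) :
    ∀ x ∈ C ∩ sphere (0 : X) 1, r ≤ g x := by
  set U := {x : X | g x < r * ‖x‖}
  have h0U : (0 : X) ∉ U := by simp [U]
  have hUfr : Disjoint U (frontier C) := by
    refine disjoint_left.2 fun x (hxU : g x < r * ‖x‖) hx ↦ ?_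
    have hx0 : x ≠ 0 := by rintro rfl; exact h0U hxU
    have := hfr _ (hC.inv_norm_smul_mem_frontier hx hx0)
    rw [map_smul, smul_eq_mul, le_inv_mul_iff₀ (norm_pos_iff.2 hx0)] at this
    linarith
  rcases (isPreconnected_setOf_lt_mul_norm g hr).subset_interior_or_disjoint hUfr
    with hUC | hUC
  · have hbU : b ∈ U := by simpa [U, mem_sphere_zero_iff_norm.1 hb.2] using hbr
    obtain ⟨y, hyU, hyK⟩ := mem_closure_iff.1 hb.1 U
      (isOpen_lt g.continuous (continuous_const.mul continuous_norm)) hbU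
    obtain rfl : y = 0 := hKC ⟨hyK, interior_subset (hUC hyU)⟩
    exact absurd hyU h0U
  · rintro x ⟨hxC, hxS⟩
    simpa [U, mem_sphere_zero_iff_norm.1 hxS] using hUC.notMem_of_mem_right hxC

theorem eq_or_eq_neg_of_rank_le_one (hrank : Module.rank ℝ X ≤ 1) {u x : X} (hu : ‖u‖ = 1)
    (hx : ‖x‖ = 1) : x = u ∨ x = -u := by
  obtain ⟨v, hv⟩ := rank_le_one_iff.1 hrank
  obtain ⟨a, rfl⟩ := hv u
  obtain ⟨b, rfl⟩ := hv x
  rw [norm_smul, Real.norm_eq_abs] at hu hx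
  have hv0 : ‖v‖ ≠ 0 := by rintro h; simp [h] at hu
  rcases abs_eq_abs.1 (mul_right_cancel₀ hv0 (hx.trans hu.symm)) with rfl | rfl
  exacts [Or.inl rfl, Or.inr (neg_smul _ _)]

theorem zero_notMem_closure_of_rank_le_one (hrank : Module.rank ℝ X ≤ 1) (hC : IsCone C)
    (hCnt : C ≠ {0} ∧ C ≠ univ) (hKC : K ∩ C ⊆ {0}) :
    (0 : X) ∉ closure (convexHull ℝ (C ∩ sphere (0 : X) 1) -
      convexHull ℝ ({0} ∪ (K ∩ sphere (0 : X) 1))) := by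
  obtain ⟨c, hc, hc0⟩ := ((nontrivial_iff_ne_singleton hC.1).2 hCnt.1).exists_ne 0
  obtain ⟨huC, huS⟩ := hC.inv_norm_smul_mem hc hc0
  set u := ‖c‖⁻¹ • c
  have hu : ‖u‖ = 1 := mem_sphere_zero_iff_norm.1 huS
  have hu0 : u ≠ 0 := norm_ne_zero_iff.1 (by rw [hu]; exact one_ne_zero)
  obtain ⟨g, -, hgu⟩ := exists_dual_vector ℝ u (norm_ne_zero_iff.2 hu0)
  have hneg : -u ∉ C := fun hnegC ↦ hCnt.2 <| eq_univ_of_forall fun y ↦ by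
    rcases eq_or_ne y 0 with rfl | hy0
    · exact hC.1
    rw [← smul_inv_smul₀ (norm_ne_zero_iff.2 hy0) y]
    refine hC.2 _ (norm_nonneg y) _ ?_
    rcases eq_or_eq_neg_of_rank_le_one hrank hu (mem_sphere_zero_iff_norm.1
      (inv_norm_smul_mem_sphere hy0)) with h | h <;> rw [h]
    exacts [huC, hnegC]
  refine zero_notMem_closure_convexHull_sub_of_le g (r₁ := 1) (r₂ := 0) ?_ ?_ one_pos
  · rintro x ⟨hxC, hxS⟩
    rcases eq_or_eq_neg_of_rank_le_one hrank hu (mem_sphere_zero_iff_norm.1 hxS) with rfl | rfl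
    · simp [hgu, hu]
    · exact absurd hxC hneg
  · rintro x (rfl | ⟨hxK, hxS⟩)
    · simp
    rcases eq_or_eq_neg_of_rank_le_one hrank hu (mem_sphere_zero_iff_norm.1 hxS) with rfl | rfl
    · exact absurd (hKC ⟨hxK, huC⟩) hu0
    · simp [hgu, hu]

theorem zero_notMem_closure_of_one_lt_rank (hrank : 1 < Module.rank ℝ X) (hC : IsCone C)
    (hK : IsCone K) (hCnt : C ≠ {0} ∧ C ≠ univ) (hKnt : K ≠ {0} ∧ K ≠ univ)
    (hfr : (0 : X) ∉ closure (convexHull ℝ (frontier C ∩ sphere (0 : X) 1) -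
      convexHull ℝ ({0} ∪ (frontier K ∩ sphere (0 : X) 1))))
    (hKC : K ∩ C = {0}) :
    (0 : X) ∉ closure (convexHull ℝ (C ∩ sphere (0 : X) 1) -
      convexHull ℝ ({0} ∪ (K ∩ sphere (0 : X) 1))) := by
  obtain ⟨a₀, ha₀⟩ := hC.frontier_inter_sphere_nonempty hrank hCnt.1 hCnt.2
  obtain ⟨b₀, hb₀⟩ := hK.frontier_inter_sphere_nonempty hrank hKnt.1 hKnt.2
  obtain ⟨g, s, α, hα, hgK, hgC⟩ := exists_separating_level ⟨a₀, ha₀⟩ ⟨0, Or.inl rfl⟩ hfr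
  have hs : 0 ≤ s := by simpa using hgK 0 (Or.inl rfl)
  have hga₀_le : g a₀ ≤ ‖g‖ := by
    simpa [mem_sphere_zero_iff_norm.1 ha₀.2] using (le_abs_self _).trans (g.le_opNorm a₀)
  have hga₀_ge := hgC a₀ ha₀
  have hCg := hC.le_apply_of_frontier (g := g) (r := s + 2 * α / 3)
    (abs_lt.2 ⟨by linarith, by linarith⟩) (fun a ha ↦ by linarith [hgC a ha]) hKC.le
    ⟨frontier_subset_closure hb₀.1, hb₀.2⟩ (by linarith [hgK b₀ (Or.inr hb₀)])
  have hKg := hK.le_apply_of_frontier (g := -g) (r := -(s + α / 3))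
    (by rw [abs_neg, norm_neg, abs_lt]; constructor <;> linarith)
    (fun b hb ↦ by simpa using hgK b (Or.inr hb) |>.trans (by linarith))
    (inter_comm C K ▸ hKC).le ⟨frontier_subset_closure ha₀.1, ha₀.2⟩
    (by rw [neg_apply]; linarith)
  refine zero_notMem_closure_convexHull_sub_of_le g hCg ?_ (by linarith : s + α / 3 < _)
  rintro x (rfl | hx)
  · rw [map_zero]
    linarith
  · simpa using hKg x hx

end

theorem nonsym_separation_via_boundaries
    {X : Type*} [NormedAddCommGroup X] [NormedSpace ℝ X]
    (C K : Set X) (hC : IsCone C) (hK : IsCone K)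
    (hCnt : C ≠ {0} ∧ C ≠ Set.univ) (hKnt : K ≠ {0} ∧ K ≠ Set.univ) :
    (0 : X) ∉ closure (convexHull ℝ (C ∩ Metric.sphere (0:X) 1) -
        convexHull ℝ ({0} ∪ (K ∩ Metric.sphere (0:X) 1))) ↔
      ((0 : X) ∉ closure (convexHull ℝ (frontier C ∩ Metric.sphere (0:X) 1) -
          convexHull ℝ ({0} ∪ (frontier K ∩ Metric.sphere (0:X) 1))) ∧
        K ∩ C = {0}) := by
  refine ⟨fun h ↦ ⟨fun h0 ↦ h (closure_convexHull_sub_subset ?_ ?_ h0),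
    hC.inter_eq_zero_of_zero_notMem_closure hK h⟩, fun ⟨hfr, hKC⟩ ↦ ?_⟩
  · exact fun x hx ↦ hC.closure_inter_sphere_subset ⟨frontier_subset_closure hx.1, hx.2⟩
  · rw [closure_union]
    exact union_subset_union subset_closure
      fun x hx ↦ hK.closure_inter_sphere_subset ⟨frontier_subset_closure hx.1, hx.2⟩
  · rcases lt_or_ge 1 (Module.rank ℝ X) with hrank | hrank
    · exact zero_notMem_closure_of_one_lt_rank hrank hC hK hCnt hKnt hfr hKC
    · exact zero_notMem_closure_of_rank_le_one hrank hC hCnt hKC.le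
end

section
/- Let C, K be nontrivial cones in a real normed space X. The following are equivalent: (i) 0 ∉ cl(S_C − S_K); (ii) there exists x* ∈ X* \ {0} with sup_{k ∈ cl S_K} x*(k) < inf_{c ∈ cl S_C} x*(c); (iii) there exists x* ∈ X* \ {0} such that sup_{k ∈ cl S_K⁰} x*(k) < inf_{c ∈ cl S_C} x*(c) or sup_{k ∈ cl S_K} x*(k) < inf_{c ∈ cl S_C⁰} x*(c); (iv) 0 ∉ cl(S_C − S_K⁰) or 0 ∉ cl(S_C⁰ − S_K). -/
open Set Pointwise

/-! Separating the bases `S_C`, `S_K` by a functional is Hahn–Banach applied to the closed convex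
set `cl (S_C - S_K)`. Since the supremum of `x*` over the closed convex hull of a bounded set is its
supremum over the set, adjoining `0` to a base turns `sup x*` into `max 0 (sup x*)` and `inf x*` into
`min 0 (inf x*)`; and `a < b` holds iff `max 0 a < b` or `a < min 0 b`. -/

open Bornology

lemma lt_iff_max_lt_or_lt_min {α : Type*} [LinearOrder α] {a b : α} (c : α) :
    a < b ↔ max c a < b ∨ a < min c b := by
  constructor
  · intro h
    rcases lt_or_ge c b with hc | hc
    · exact .inl (max_lt hc h)
    · exact .inr (by rwa [min_eq_right hc])
  · rintro (h | h)
    · exact (le_max_right c a).trans_lt h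
    · exact h.trans_le (min_le_right c b)

lemma sSup_lt_sInf_iff_exists_add_le {A B : Set ℝ} (hA : A.Nonempty) (hB : B.Nonempty)
    (hAb : BddBelow A) (hBb : BddAbove B) :
    sSup B < sInf A ↔ ∃ δ > 0, ∀ a ∈ A, ∀ b ∈ B, b + δ ≤ a := by
  constructor
  · intro h
    refine ⟨sInf A - sSup B, sub_pos.2 h, fun a ha b hb => ?_⟩
    linarith [le_csSup hBb hb, csInf_le hAb ha]
  · rintro ⟨δ, hδ, h⟩
    have : sSup B + δ ≤ sInf A := le_csInf hA fun a ha =>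
      le_sub_iff_add_le.1 (csSup_le hB fun b hb => le_sub_iff_add_le.2 (h a ha b hb))
    linarith

section
variable {X : Type*} [NormedAddCommGroup X] [NormedSpace ℝ X]

lemma IsCone.inter_sphere_nonempty {C : Set X} (hC : IsCone C) (hC0 : C ≠ {0}) :
    (C ∩ Metric.sphere (0 : X) 1).Nonempty := by
  obtain ⟨x, hxC, hx0⟩ : ∃ x ∈ C, x ≠ 0 := by
    by_contra! h
    exact hC0 (eq_singleton_iff_unique_mem.2 ⟨hC.1, h⟩)
  exact ⟨‖x‖⁻¹ • x, hC.2 _ (by positivity) x hxC, by simp [norm_smul, hx0]⟩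

lemma zero_notMem_closure_sub_iff_exists_gap {P Q : Set X} (hP : Convex ℝ P) (hQ : Convex ℝ Q) :
    (0 : X) ∉ closure (P - Q) ↔
      ∃ f : X →L[ℝ] ℝ, ∃ δ > 0, ∀ a ∈ closure P, ∀ b ∈ closure Q, f b + δ ≤ f a := by
  constructor
  · intro h
    obtain ⟨f, u, hu, hf⟩ :=
      geometric_hahn_banach_point_closed (hP.sub hQ).closure isClosed_closure h
    refine ⟨f, u, by simpa using hu, fun a ha b hb => ?_⟩
    have := hf (a - b) (map_mem_closure₂ continuous_sub ha hb fun x hx y hy => sub_mem_sub hx hy)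
    rw [map_sub] at this
    linarith
  · rintro ⟨f, δ, hδ, hf⟩ h
    have hPQ : P - Q ⊆ {z | δ ≤ f z} := by
      rintro _ ⟨a, ha, b, hb, rfl⟩
      have := hf a (subset_closure ha) b (subset_closure hb)
      show δ ≤ f (a - b)
      rw [map_sub]
      linarith
    have := closure_minimal hPQ (isClosed_le continuous_const f.continuous) h
    exact hδ.not_ge (by simpa using this)

theorem zero_notMem_closure_sub_iff_exists_sSup_lt_sInf {P Q : Set X}
    (hP : Convex ℝ P) (hQ : Convex ℝ Q) (hPne : P.Nonempty) (hQne : Q.Nonempty)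
    (hPb : IsBounded P) (hQb : IsBounded Q) :
    (0 : X) ∉ closure (P - Q) ↔
      ∃ f : X →L[ℝ] ℝ, f ≠ 0 ∧ sSup (f '' closure Q) < sInf (f '' closure P) := by
  rw [zero_notMem_closure_sub_iff_exists_gap hP hQ]
  refine exists_congr fun f => ?_
  have hbdd {S : Set X} (hS : IsBounded S) : IsBounded (f '' closure S) :=
    f.lipschitz.isBounded_image hS.closure
  rw [sSup_lt_sInf_iff_exists_add_le (hPne.closure.image f) (hQne.closure.image f)
    (hbdd hPb).bddBelow (hbdd hQb).bddAbove]
  simp only [forall_mem_image]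
  refine ⟨fun h => ⟨?_, h⟩, And.right⟩
  rintro rfl
  obtain ⟨δ, hδ, h⟩ := h
  obtain ⟨a, ha⟩ := hPne
  obtain ⟨b, hb⟩ := hQne
  have := h a (subset_closure ha) b (subset_closure hb)
  simp only [zero_apply, zero_add] at this
  linarith

theorem zero_notMem_closure_convexHull_sub_iff {s t : Set X} (hs : s.Nonempty) (ht : t.Nonempty)
    (hsb : IsBounded s) (htb : IsBounded t) :
    (0 : X) ∉ closure (convexHull ℝ s - convexHull ℝ t) ↔
      ∃ f : X →L[ℝ] ℝ, f ≠ 0 ∧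
        sSup (f '' closure (convexHull ℝ t)) < sInf (f '' closure (convexHull ℝ s)) :=
  zero_notMem_closure_sub_iff_exists_sSup_lt_sInf (convex_convexHull ℝ s) (convex_convexHull ℝ t)
    hs.convexHull ht.convexHull (isBounded_convexHull.2 hsb) (isBounded_convexHull.2 htb)

lemma ContinuousLinearMap.sSup_image_closure_convexHull (f : X →L[ℝ] ℝ) {s : Set X}
    (hs : s.Nonempty) (hbdd : BddAbove (f '' s)) :
    sSup (f '' closure (convexHull ℝ s)) = sSup (f '' s) := by
  have hsub : closure (convexHull ℝ s) ⊆ {x | f x ≤ sSup (f '' s)} :=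
    closure_minimal
      (convexHull_min (fun x hx => le_csSup hbdd (mem_image_of_mem f hx))
        (convex_halfSpace_le f.isLinear _))
      (isClosed_le f.continuous continuous_const)
  exact le_antisymm (csSup_le (hs.convexHull.closure.image f) (forall_mem_image.2 hsub))
    (csSup_le_csSup ⟨_, forall_mem_image.2 hsub⟩ (hs.image f)
      (image_mono ((subset_convexHull ℝ s).trans subset_closure)))

lemma ContinuousLinearMap.sInf_image_closure_convexHull (f : X →L[ℝ] ℝ) {s : Set X}
    (hs : s.Nonempty) (hbdd : BddBelow (f '' s)) :
    sInf (f '' closure (convexHull ℝ s)) = sInf (f '' s) := by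
  have hneg (S : Set X) : -(f '' S) = (-f) '' S := by ext; simp [neg_eq_iff_eq_neg]
  rw [Real.sInf_def, Real.sInf_def, hneg, hneg,
    (-f).sSup_image_closure_convexHull hs (by rwa [← hneg, bddAbove_neg])]

lemma sSup_lt_sInf_closure_convexHull_iff_zero_union (f : X →L[ℝ] ℝ) {s t : Set X}
    (hs : s.Nonempty) (ht : t.Nonempty) (hsb : BddBelow (f '' s)) (htb : BddAbove (f '' t)) :
    sSup (f '' closure (convexHull ℝ t)) < sInf (f '' closure (convexHull ℝ s)) ↔
      sSup (f '' closure (convexHull ℝ ({0} ∪ t))) < sInf (f '' closure (convexHull ℝ s)) ∨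
        sSup (f '' closure (convexHull ℝ t)) < sInf (f '' closure (convexHull ℝ ({0} ∪ s))) := by
  simp only [singleton_union]
  rw [f.sSup_image_closure_convexHull ht htb, f.sInf_image_closure_convexHull hs hsb,
    f.sSup_image_closure_convexHull (insert_nonempty 0 t) (by rw [image_insert_eq]; exact htb.insert _),
    f.sInf_image_closure_convexHull (insert_nonempty 0 s) (by rw [image_insert_eq]; exact hsb.insert _),
    image_insert_eq, image_insert_eq, map_zero, csSup_insert htb (ht.image f),
    csInf_insert hsb (hs.image f)]
  exact lt_iff_max_lt_or_lt_min 0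

end

theorem symmetric_separation_conditions_tfae
    {X : Type*} [NormedAddCommGroup X] [NormedSpace ℝ X]
    (C K : Set X) (hC : IsCone C) (hK : IsCone K)
    (hCnt : C ≠ {0} ∧ C ≠ Set.univ) (hKnt : K ≠ {0} ∧ K ≠ Set.univ) :
    (((0 : X) ∉ closure (convexHull ℝ (C ∩ Metric.sphere (0:X) 1) -
          convexHull ℝ (K ∩ Metric.sphere (0:X) 1))) ↔
      (∃ f : X →L[ℝ] ℝ, f ≠ 0 ∧
        sSup (f '' closure (convexHull ℝ (K ∩ Metric.sphere (0:X) 1))) <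
          sInf (f '' closure (convexHull ℝ (C ∩ Metric.sphere (0:X) 1))))) ∧
    ((∃ f : X →L[ℝ] ℝ, f ≠ 0 ∧
        sSup (f '' closure (convexHull ℝ (K ∩ Metric.sphere (0:X) 1))) <
          sInf (f '' closure (convexHull ℝ (C ∩ Metric.sphere (0:X) 1)))) ↔
      (∃ f : X →L[ℝ] ℝ, f ≠ 0 ∧
        (sSup (f '' closure (convexHull ℝ ({0} ∪ (K ∩ Metric.sphere (0:X) 1)))) <
            sInf (f '' closure (convexHull ℝ (C ∩ Metric.sphere (0:X) 1))) ∨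
          sSup (f '' closure (convexHull ℝ (K ∩ Metric.sphere (0:X) 1))) <
            sInf (f '' closure (convexHull ℝ ({0} ∪ (C ∩ Metric.sphere (0:X) 1))))))) ∧
    ((∃ f : X →L[ℝ] ℝ, f ≠ 0 ∧
        (sSup (f '' closure (convexHull ℝ ({0} ∪ (K ∩ Metric.sphere (0:X) 1)))) <
            sInf (f '' closure (convexHull ℝ (C ∩ Metric.sphere (0:X) 1))) ∨
          sSup (f '' closure (convexHull ℝ (K ∩ Metric.sphere (0:X) 1))) <
            sInf (f '' closure (convexHull ℝ ({0} ∪ (C ∩ Metric.sphere (0:X) 1)))))) ↔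
      ((0 : X) ∉ closure (convexHull ℝ (C ∩ Metric.sphere (0:X) 1) -
          convexHull ℝ ({0} ∪ (K ∩ Metric.sphere (0:X) 1))) ∨
        (0 : X) ∉ closure (convexHull ℝ ({0} ∪ (C ∩ Metric.sphere (0:X) 1)) -
          convexHull ℝ (K ∩ Metric.sphere (0:X) 1)))) := by
  set sC := C ∩ Metric.sphere (0 : X) 1
  set sK := K ∩ Metric.sphere (0 : X) 1
  have hsC : sC.Nonempty := hC.inter_sphere_nonempty hCnt.1
  have hsK : sK.Nonempty := hK.inter_sphere_nonempty hKnt.1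
  have hbC : IsBounded sC := Metric.isBounded_sphere.subset inter_subset_right
  have hbK : IsBounded sK := Metric.isBounded_sphere.subset inter_subset_right
  have hbdd (f : X →L[ℝ] ℝ) {S : Set X} (hS : IsBounded S) : IsBounded (f '' S) :=
    f.lipschitz.isBounded_image hS
  refine ⟨zero_notMem_closure_convexHull_sub_iff hsC hsK hbC hbK,
    exists_congr fun f => and_congr_right' (sSup_lt_sInf_closure_convexHull_iff_zero_union f
      hsC hsK (hbdd f hbC).bddBelow (hbdd f hbK).bddAbove), ?_⟩
  simp only [and_or_left, exists_or]
  rw [zero_notMem_closure_convexHull_sub_iff hsC (hsK.mono subset_union_right) hbC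
      (isBounded_singleton.union hbK),
    zero_notMem_closure_convexHull_sub_iff (hsC.mono subset_union_right) hsK
      (isBounded_singleton.union hbC) hbK]
end

section
/- Let C, K be nontrivial cones in a real normed space X. If cl S_C ∩ cl S_K = ∅ (with S_D := conv(D ∩ S_X)), then (cl K) ∩ (cl C) = {0} and [0 ∉ cl S_K or 0 ∉ cl S_C]. -/
open Set Pointwise

lemma cone_closure_normalize {X : Type*} [NormedAddCommGroup X] [NormedSpace ℝ X]
    {K : Set X} (hK : IsCone K) {x : X} (hx : x ∈ closure K) (hx0 : x ≠ 0) :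
    ‖x‖⁻¹ • x ∈ closure (K ∩ Metric.sphere (0:X) 1) := by
  obtain ⟨u, hu, hlim⟩ := mem_closure_iff_seq_limit.mp hx
  have hnx : ‖x‖ ≠ 0 := norm_ne_zero_iff.mpr hx0
  have hnorm : Filter.Tendsto (fun n => ‖u n‖) Filter.atTop (nhds ‖x‖) :=
    (continuous_norm.tendsto x).comp hlim
  have hev : ∀ᶠ n in Filter.atTop, u n ≠ 0 := by
    filter_upwards [hnorm.eventually (eventually_gt_nhds (norm_pos_iff.mpr hx0))] with n hn
    exact norm_pos_iff.mp hn
  have hts : Filter.Tendsto (fun n => ‖u n‖⁻¹ • u n) Filter.atTop (nhds (‖x‖⁻¹ • x)) :=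
    (hnorm.inv₀ hnx).smul hlim
  refine mem_closure_of_tendsto hts ?_
  filter_upwards [hev] with n hn
  refine ⟨hK.2 _ (inv_nonneg.mpr (norm_nonneg _)) _ (hu n), ?_⟩
  have : ‖u n‖ ≠ 0 := norm_ne_zero_iff.mpr hn
  simp [mem_sphere_zero_iff_norm, norm_smul, abs_of_nonneg (norm_nonneg (u n)),
    inv_mul_cancel₀ this]

theorem disjoint_base_closures_implies_pointed_intersection
    {X : Type*} [NormedAddCommGroup X] [NormedSpace ℝ X]
    (C K : Set X) (hC : IsCone C) (hK : IsCone K)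
    (hCnt : C ≠ {0} ∧ C ≠ Set.univ) (hKnt : K ≠ {0} ∧ K ≠ Set.univ)
    (h : closure (convexHull ℝ (C ∩ Metric.sphere (0:X) 1)) ∩
        closure (convexHull ℝ (K ∩ Metric.sphere (0:X) 1)) = ∅) :
    closure K ∩ closure C = {0} ∧
      ((0 : X) ∉ closure (convexHull ℝ (K ∩ Metric.sphere (0:X) 1)) ∨
        (0 : X) ∉ closure (convexHull ℝ (C ∩ Metric.sphere (0:X) 1))) := by
  constructor
  · ext x
    simp only [mem_inter_iff, mem_singleton_iff]
    constructor
    · rintro ⟨hxK, hxC⟩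
      by_contra hx0
      have h1 := cone_closure_normalize hK hxK hx0
      have h2 := cone_closure_normalize hC hxC hx0
      have hmem : ‖x‖⁻¹ • x ∈ closure (convexHull ℝ (C ∩ Metric.sphere (0:X) 1)) ∩
          closure (convexHull ℝ (K ∩ Metric.sphere (0:X) 1)) :=
        ⟨closure_mono (subset_convexHull ℝ _) h2, closure_mono (subset_convexHull ℝ _) h1⟩
      rw [h] at hmem
      exact hmem
    · rintro rfl
      exact ⟨subset_closure hK.1, subset_closure hC.1⟩
  · by_contra hc
    push_neg at hc
    have hmem : (0:X) ∈ closure (convexHull ℝ (C ∩ Metric.sphere (0:X) 1)) ∩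
        closure (convexHull ℝ (K ∩ Metric.sphere (0:X) 1)) := ⟨hc.2, hc.1⟩
    rw [h] at hmem
    exact hmem
end

section
/- Let C, K be nontrivial cones in a real normed space X. The following are equivalent: (i) 0 ∉ cl(S_C − S_K⁰); (ii) there exists x* ∈ X* \ {0} such that for every α in the (nonempty, contained in (0,∞)) open interval (sup_{k ∈ cl S_K⁰} x*(k), inf_{c ∈ cl S_C} x*(c)), one has x*(c) − α‖c‖ > 0 > x*(k) − α‖k‖ for all c ∈ C \ {0} and k ∈ K \ {0}. -/
open Set Pointwise

theorem nonsym_strict_cone_separation_characterization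
    {X : Type*} [NormedAddCommGroup X] [NormedSpace ℝ X]
    (C K : Set X) (hC : IsCone C) (hK : IsCone K)
    (hCnt : C ≠ {0} ∧ C ≠ Set.univ) (hKnt : K ≠ {0} ∧ K ≠ Set.univ) :
    (0 : X) ∉ closure (convexHull ℝ (C ∩ Metric.sphere (0:X) 1) -
        convexHull ℝ ({0} ∪ (K ∩ Metric.sphere (0:X) 1))) ↔
      ∃ f : X →L[ℝ] ℝ, f ≠ 0 ∧
        (0 ≤ sSup (f '' closure (convexHull ℝ ({0} ∪ (K ∩ Metric.sphere (0:X) 1))))) ∧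
        sSup (f '' closure (convexHull ℝ ({0} ∪ (K ∩ Metric.sphere (0:X) 1)))) <
          sInf (f '' closure (convexHull ℝ (C ∩ Metric.sphere (0:X) 1))) ∧
        ∀ α ∈ Set.Ioo
            (sSup (f '' closure (convexHull ℝ ({0} ∪ (K ∩ Metric.sphere (0:X) 1)))))
            (sInf (f '' closure (convexHull ℝ (C ∩ Metric.sphere (0:X) 1)))),
          (∀ c ∈ C \ {0}, 0 < f c - α * ‖c‖) ∧ (∀ k ∈ K \ {0}, f k - α * ‖k‖ < 0) := by
  classical
  set D1 : Set X := convexHull ℝ (C ∩ Metric.sphere (0:X) 1) with hD1def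
  set D2 : Set X := convexHull ℝ ({0} ∪ (K ∩ Metric.sphere (0:X) 1)) with hD2def
  -- the closures are contained in the closed unit ball
  have hball : ∀ s : Set X, s ⊆ Metric.closedBall (0:X) 1 →
      closure (convexHull ℝ s) ⊆ Metric.closedBall (0:X) 1 := fun s hs =>
    (IsClosed.closure_subset_iff Metric.isClosed_closedBall).2
      (convexHull_min hs (convex_closedBall _ _))
  have hCball : closure D1 ⊆ Metric.closedBall (0:X) 1 :=
    hball _ (fun x hx => Metric.sphere_subset_closedBall hx.2)
  have hKball : closure D2 ⊆ Metric.closedBall (0:X) 1 := by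
    refine hball _ ?_
    rintro x (hx | hx)
    · simp only [Set.mem_singleton_iff] at hx
      subst hx; simp
    · exact Metric.sphere_subset_closedBall hx.2
  -- boundedness of images of subsets of the ball
  have hbdd : ∀ (f : X →L[ℝ] ℝ) (s : Set X), s ⊆ Metric.closedBall (0:X) 1 →
      BddBelow (f '' s) ∧ BddAbove (f '' s) := by
    intro f s hs
    have habs : ∀ z ∈ f '' s, |z| ≤ ‖f‖ := by
      rintro _ ⟨y, hy, rfl⟩
      have h1 : ‖f y‖ ≤ ‖f‖ * ‖y‖ := f.le_opNorm y
      have h2 : ‖y‖ ≤ 1 := mem_closedBall_zero_iff.1 (hs hy)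
      have h3 : (0:ℝ) ≤ ‖f‖ := norm_nonneg f
      have : |f y| = ‖f y‖ := (Real.norm_eq_abs _).symm
      nlinarith
    exact ⟨⟨-‖f‖, fun z hz => neg_le_of_abs_le (habs z hz)⟩,
      ⟨‖f‖, fun z hz => le_of_abs_le (habs z hz)⟩⟩
  -- 0 ∈ closure D2
  have h0D2 : (0:X) ∈ D2 := subset_convexHull ℝ _ (Or.inl rfl)
  have h0B : (0:X) ∈ closure D2 := subset_closure h0D2
  -- normalization of nonzero cone elements
  have hnorm : ∀ (D : Set X), IsCone D → ∀ x ∈ D, x ≠ 0 →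
      ‖x‖⁻¹ • x ∈ D ∩ Metric.sphere (0:X) 1 := by
    intro D hD x hx hx0
    refine ⟨hD.2 _ (inv_nonneg.2 (norm_nonneg x)) x hx, ?_⟩
    rw [mem_sphere_zero_iff_norm, norm_smul, norm_inv, norm_norm,
      inv_mul_cancel₀ (norm_ne_zero_iff.2 hx0)]
  -- a nonzero element of C, giving nonemptiness of closure D1
  obtain ⟨c0, hc0C, hc0⟩ : ∃ c ∈ C, c ≠ 0 := by
    by_contra h
    push_neg at h
    exact hCnt.1 (Set.eq_singleton_iff_unique_mem.2 ⟨hC.1, h⟩)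
  have hc0hat : ‖c0‖⁻¹ • c0 ∈ C ∩ Metric.sphere (0:X) 1 := hnorm C hC c0 hc0C hc0
  have ha0 : ‖c0‖⁻¹ • c0 ∈ closure D1 :=
    subset_closure (subset_convexHull ℝ _ hc0hat)
  constructor
  · -- forward direction
    intro h0
    have hconv : Convex ℝ (closure (D1 - D2)) :=
      ((convex_convexHull ℝ _).sub (convex_convexHull ℝ _)).closure
    obtain ⟨f, u, hfu, hu⟩ :=
      geometric_hahn_banach_point_closed hconv isClosed_closure h0
    have hu0 : 0 < u := by simpa using hfu
    obtain ⟨hbddA_below, hbddA_above⟩ := hbdd f _ hCball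
    obtain ⟨hbddB_below, hbddB_above⟩ := hbdd f _ hKball
    set M : ℝ := sSup (f '' closure D2) with hMdef
    set m : ℝ := sInf (f '' closure D1) with hmdef
    -- the key separation inequality on the closures
    have st1 : ∀ a ∈ D1, ∀ b ∈ D2, u < f a - f b := by
      intro a ha b hb
      have := hu (a - b) (subset_closure (Set.sub_mem_sub ha hb))
      simpa [map_sub] using this
    have st2 : ∀ b ∈ D2, ∀ a ∈ closure D1, u ≤ f a - f b := by
      intro b hb
      have hcl : IsClosed {x : X | u ≤ f x - f b} :=
        isClosed_le continuous_const (f.continuous.sub continuous_const)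
      intro a ha
      exact (hcl.closure_subset_iff.2 (fun x hx => (st1 x hx b hb).le)) ha
    have key : ∀ a ∈ closure D1, ∀ b ∈ closure D2, u ≤ f a - f b := by
      intro a ha
      have hcl : IsClosed {x : X | u ≤ f a - f x} :=
        isClosed_le continuous_const (continuous_const.sub f.continuous)
      intro b hb
      exact (hcl.closure_subset_iff.2 (fun x hx => st2 x hx a ha)) hb
    have hM0 : 0 ≤ M := by
      have : f 0 ≤ M := le_csSup hbddB_above ⟨0, h0B, rfl⟩
      simpa using this
    have hMum : M + u ≤ m := by
      refine le_csInf ⟨f (‖c0‖⁻¹ • c0), ⟨_, ha0, rfl⟩⟩ ?_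
      rintro _ ⟨a, ha, rfl⟩
      have : M ≤ f a - u := by
        refine csSup_le ⟨f 0, 0, h0B, rfl⟩ ?_
        rintro _ ⟨b, hb, rfl⟩
        linarith [key a ha b hb]
      linarith
    have hMm : M < m := by linarith
    have hma : m ≤ f (‖c0‖⁻¹ • c0) := csInf_le hbddA_below ⟨_, ha0, rfl⟩
    refine ⟨f, ?_, hM0, hMm, ?_⟩
    · intro hf
      rw [hf] at hma
      simp at hma
      linarith
    · rintro α ⟨hα1, hα2⟩
      constructor
      · intro c hc
        have hcne : c ≠ 0 := hc.2
        have hchat := hnorm C hC c hc.1 hcne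
        have hcm : m ≤ f (‖c‖⁻¹ • c) :=
          csInf_le hbddA_below ⟨_, subset_closure (subset_convexHull ℝ _ hchat), rfl⟩
        have hcpos : (0:ℝ) < ‖c‖ := norm_pos_iff.2 hcne
        have : α < ‖c‖⁻¹ * f c := by
          have := f.map_smul (‖c‖⁻¹) c
          rw [ContinuousLinearMap.map_smul, smul_eq_mul] at hcm
          linarith
        have : α < f c / ‖c‖ := by rwa [inv_mul_eq_div] at this
        have := (lt_div_iff₀ hcpos).1 this
        linarith
      · intro k hk
        have hkne : k ≠ 0 := hk.2
        have hkhat := hnorm K hK k hk.1 hkne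
        have hkM : f (‖k‖⁻¹ • k) ≤ M :=
          le_csSup hbddB_above ⟨_, subset_closure (subset_convexHull ℝ _ (Or.inr hkhat)), rfl⟩
        have hkpos : (0:ℝ) < ‖k‖ := norm_pos_iff.2 hkne
        have : ‖k‖⁻¹ * f k < α := by
          rw [ContinuousLinearMap.map_smul, smul_eq_mul] at hkM
          linarith
        have : f k / ‖k‖ < α := by rwa [inv_mul_eq_div] at this
        have := (div_lt_iff₀ hkpos).1 this
        linarith
  · -- reverse direction
    rintro ⟨f, hf0, hM0, hMm, hα⟩ h0
    obtain ⟨hbddA_below, hbddA_above⟩ := hbdd f _ hCball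
    obtain ⟨hbddB_below, hbddB_above⟩ := hbdd f _ hKball
    set M : ℝ := sSup (f '' closure D2) with hMdef
    set m : ℝ := sInf (f '' closure D1) with hmdef
    have key : ∀ x ∈ D1 - D2, m - M ≤ f x := by
      intro x hx
      obtain ⟨a, ha, b, hb, rfl⟩ := Set.mem_sub.1 hx
      have h1 : m ≤ f a := csInf_le hbddA_below ⟨a, subset_closure ha, rfl⟩
      have h2 : f b ≤ M := le_csSup hbddB_above ⟨b, subset_closure hb, rfl⟩
      rw [map_sub]
      linarith
    have hcl : IsClosed {x : X | m - M ≤ f x} :=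
      isClosed_le continuous_const f.continuous
    have : m - M ≤ f 0 := (hcl.closure_subset_iff.2 key) h0
    simp at this
    linarith
end

section
/- Let C, K be nontrivial cones in a real normed space X with C ⊆ K, and set K̂ := (X \ K) ∪ {0}. If 0 ∉ cl(S_C − S_{K̂}⁰), then there exist x* ∈ X* and α ∈ (0, ‖x*‖₊) such that the Bishop-Phelps cone D := {x : x*(x) ≥ α‖x‖} satisfies C \ {0} ⊆ int D and D ⊆ K; in particular int C ⊆ int D ⊆ int K and C ⊆ D ⊆ K. -/
open Set Pointwise

set_option maxHeartbeats 1000000 in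
theorem interpolation_by_bishopPhelps_cone
    {X : Type*} [NormedAddCommGroup X] [NormedSpace ℝ X]
    (C K : Set X) (hC : IsCone C) (hK : IsCone K)
    (hCnt : C ≠ {0} ∧ C ≠ Set.univ) (hKnt : K ≠ {0} ∧ K ≠ Set.univ)
    (hCK : C ⊆ K)
    (h : (0 : X) ∉ closure (convexHull ℝ (C ∩ Metric.sphere (0:X) 1) -
        convexHull ℝ ({0} ∪ (((Set.univ \ K) ∪ {0}) ∩ Metric.sphere (0:X) 1)))) :
    ∃ f : X →L[ℝ] ℝ, ∃ α ∈ Set.Ioo (0:ℝ) ‖f‖,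
      C \ {0} ⊆ interior {x : X | α * ‖x‖ ≤ f x} ∧
      {x : X | α * ‖x‖ ≤ f x} ⊆ K ∧
      interior C ⊆ interior {x : X | α * ‖x‖ ≤ f x} ∧
      interior {x : X | α * ‖x‖ ≤ f x} ⊆ interior K ∧
      C ⊆ {x : X | α * ‖x‖ ≤ f x} := by
  classical
  set SC := C ∩ Metric.sphere (0:X) 1 with hSC
  set SK := ({0} : Set X) ∪ (((Set.univ \ K) ∪ {0}) ∩ Metric.sphere (0:X) 1) with hSK
  -- separation
  obtain ⟨f, u, hfu, hu0⟩ :=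
    geometric_hahn_banach_closed_point
      (Convex.closure ((convex_convexHull ℝ SC).sub (convex_convexHull ℝ SK)))
      isClosed_closure h
  rw [map_zero] at hu0
  set g : X →L[ℝ] ℝ := -f with hg
  set ε : ℝ := -u with hε
  have hεpos : 0 < ε := by simp [hε]; linarith
  have key : ∀ a ∈ SC, ∀ b ∈ SK, g b + ε ≤ g a := by
    intro a ha b hb
    have hab : a - b ∈ closure (convexHull ℝ SC - convexHull ℝ SK) :=
      subset_closure (sub_mem_sub (subset_convexHull ℝ SC ha) (subset_convexHull ℝ SK hb))
    have := hfu _ hab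
    rw [map_sub] at this
    simp only [hg, hε, ContinuousLinearMap.neg_apply]
    linarith
  -- a nonzero element of C
  have hx0 : ∃ x ∈ C, x ≠ 0 := by
    by_contra hcon
    push_neg at hcon
    apply hCnt.1
    ext x
    simp only [Set.mem_singleton_iff]
    exact ⟨fun hx => hcon x hx, fun hx => hx ▸ hC.1⟩
  obtain ⟨x₀, hx₀C, hx₀⟩ := hx0
  have hx₁C : (‖x₀‖⁻¹ • x₀) ∈ SC := by
    constructor
    · exact hC.2 _ (by positivity) _ hx₀C
    · rw [mem_sphere_zero_iff_norm]
      exact norm_smul_inv_norm hx₀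
  have h0SK : (0 : X) ∈ SK := Or.inl rfl
  have hg0 : g 0 = 0 := map_zero g
  -- every value on SC is ≥ ε
  have hlow : ∀ y ∈ g '' SC, ε ≤ y := by
    rintro y ⟨a, ha, rfl⟩
    have := key a ha 0 h0SK
    rw [hg0] at this; linarith
  have hne : (g '' SC).Nonempty := ⟨g _, Set.mem_image_of_mem g hx₁C⟩
  have hbdd : BddBelow (g '' SC) := ⟨ε, hlow⟩
  set m : ℝ := sInf (g '' SC) with hm
  have hεm : ε ≤ m := le_csInf hne hlow
  have hmle : ∀ a ∈ SC, m ≤ g a := fun a ha => csInf_le hbdd (Set.mem_image_of_mem g ha)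
  have hble : ∀ b ∈ SK, g b + ε ≤ m := by
    intro b hb
    refine le_csInf hne ?_
    rintro y ⟨a, ha, rfl⟩
    exact key a ha b hb
  set α : ℝ := m - ε / 2 with hα
  have hαpos : 0 < α := by simp only [hα]; linarith
  have hαm : α < m := by simp only [hα]; linarith
  -- α < ‖g‖
  have hαnorm : α < ‖g‖ := by
    have h1 : g (‖x₀‖⁻¹ • x₀) ≤ ‖g‖ := by
      have hle := g.le_opNorm (‖x₀‖⁻¹ • x₀)
      have hn : ‖(‖x₀‖⁻¹ • x₀ : X)‖ = 1 := mem_sphere_zero_iff_norm.mp hx₁C.2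
      rw [hn, mul_one] at hle
      exact le_trans (le_abs_self _) hle
    have h2 := hmle _ hx₁C
    linarith
  -- scaling identity
  have hscale : ∀ x : X, x ≠ 0 → g x = ‖x‖ * g (‖x‖⁻¹ • x) := by
    intro x hx
    rw [map_smul, smul_eq_mul, ← mul_assoc, mul_inv_cancel₀ (norm_ne_zero_iff.mpr hx), one_mul]
  set D : Set X := {x : X | α * ‖x‖ ≤ g x} with hD
  set U : Set X := {x : X | α * ‖x‖ < g x} with hU
  have hUopen : IsOpen U := isOpen_lt (continuous_const.mul continuous_norm) g.continuous
  have hUD : U ⊆ D := by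
    intro x hx
    have hx' : α * ‖x‖ < g x := hx
    show α * ‖x‖ ≤ g x
    exact le_of_lt hx'
  have hCU : C \ {0} ⊆ U := by
    rintro x ⟨hxC, hx0'⟩
    have hx : x ≠ 0 := hx0'
    have hxS : (‖x‖⁻¹ • x) ∈ SC := by
      constructor
      · exact hC.2 _ (by positivity) _ hxC
      · rw [mem_sphere_zero_iff_norm]; exact norm_smul_inv_norm hx
    have h1 := hmle _ hxS
    have h2 : 0 < ‖x‖ := norm_pos_iff.mpr hx
    have := hscale x hx
    show α * ‖x‖ < g x
    rw [this]
    have : α * ‖x‖ < m * ‖x‖ := by nlinarith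
    nlinarith
  have hCintD : C \ {0} ⊆ interior D :=
    fun x hx => interior_maximal hUD hUopen (hCU hx)
  have hDK : D ⊆ K := by
    intro x hx
    by_contra hxK
    have hx0' : x ≠ 0 := fun hc => hxK (hc ▸ hK.1)
    have hxS : (‖x‖⁻¹ • x) ∈ SK := by
      refine Or.inr ⟨Or.inl ⟨Set.mem_univ _, ?_⟩, ?_⟩
      · intro hmem
        have hmem2 := hK.2 (‖x‖) (norm_nonneg x) _ hmem
        rw [smul_smul, mul_inv_cancel₀ (norm_ne_zero_iff.mpr hx0'), one_smul] at hmem2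
        exact hxK hmem2
      · rw [mem_sphere_zero_iff_norm]; exact norm_smul_inv_norm hx0'
    have h1 := hble _ hxS
    have h2 : 0 < ‖x‖ := norm_pos_iff.mpr hx0'
    have h3 : α * ‖x‖ ≤ g x := hx
    rw [hscale x hx0'] at h3
    nlinarith
  have h0D : (0 : X) ∈ D := by
    show α * ‖(0:X)‖ ≤ g 0
    simp [hg0]
  have hCD : C ⊆ D := by
    intro x hx
    by_cases hx0' : x = 0
    · rw [hx0']; exact h0D
    · exact interior_subset (hCintD ⟨hx, hx0'⟩)
  exact ⟨g, α, ⟨hαpos, hαnorm⟩, hCintD, hDK, interior_mono hCD, interior_mono hDK, hCD⟩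
end
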